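/- arXiv:1309.1072 — 7 statements merged into one kernel-verified Lean document; each statement's English description precedes it below -/
import Mathlib

section
/- The class of squarefree monomial ideals of linear type is closed under adding an M-element: if I = (f_1,...,f_s) is a squarefree monomial ideal, f_1 is an M-element of I, and I' = (f_2,...,f_s) is of linear type, then I is of linear type. -/
/-- `I = (f i)` is of linear type: the kernel of the Rees presentation
`S[T] → S[It] ⊆ S[t]`, `T i ↦ f i · t`, is generated by its `T`-degree-one part. -/
def IsLinearType {R : Type*} [CommRing R] {σ : Type*} (f : σ → R) : Prop :=
  RingHom.ker (MvPolynomial.aeval (R := R)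
      (fun i : σ => Polynomial.C (f i) * Polynomial.X)).toRingHom =
    Ideal.span {p : MvPolynomial σ R |
      p ∈ RingHom.ker (MvPolynomial.aeval (R := R)
        (fun i : σ => Polynomial.C (f i) * Polynomial.X)).toRingHom ∧
      MvPolynomial.IsHomogeneous p 1}

/-- The squarefree monomial `∏_{j ∈ F} x_j`. -/
noncomputable def sqMon (K : Type*) [Field K] {n : ℕ} (F : Finset (Fin n)) :
    MvPolynomial (Fin n) K :=
  ∏ j ∈ F, MvPolynomial.X j
/-- `F i₀` is an M-element of the squarefree monomial ideal with (minimal) generators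
`F j`: there is an ordering `x 0 < x 1 < ⋯ < x (r-1)` of the variables of `F i₀` such
that whenever `x k` divides `F j` with `j ≠ i₀`, then `x k, x (k+1), …, x (r-1)` all
divide `F j`. -/
def IsMElement {n : ℕ} {σ : Type*} (F : σ → Finset (Fin n)) (i₀ : σ) : Prop :=
  ∃ (r : ℕ) (x : Fin r → Fin n), Function.Injective x ∧
    F i₀ = Finset.image x Finset.univ ∧
    ∀ (k : Fin r) (j : σ), j ≠ i₀ → x k ∈ F j → ∀ k' : Fin r, k ≤ k' → x k' ∈ F j

open MvPolynomial

namespace LTAux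

variable {K : Type*} [Field K] {n : ℕ}

/-- generic: product of monomials with coefficient 1 -/
lemma prod_monomial_one {τ υ : Type*} (d : τ →₀ ℕ) (h : τ → ℕ → (υ →₀ ℕ))
    (h0 : ∀ v, h v 0 = 0) (hadd : ∀ v a b, h v (a + b) = h v a + h v b) :
    (d.prod fun v k => monomial (h v k) (1 : K)) = monomial (d.sum h) 1 := by
  induction d using Finsupp.induction with
  | zero => simp
  | single_add a b f haf hb ih =>
      rw [Finsupp.prod_add_index' (by simp [h0]) (by simp [hadd, monomial_mul]),
        Finsupp.sum_add_index' (by simp [h0]) (by simp [hadd]),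
        Finsupp.prod_single_index (by simp [h0]), Finsupp.sum_single_index (by simp [h0]),
        ih, monomial_mul, one_mul]

lemma monomial_finset_sum {α υ : Type*} (A : Finset α) (h : α → (υ →₀ ℕ)) :
    monomial (∑ a ∈ A, h a) (1 : K) = ∏ a ∈ A, monomial (h a) 1 := by
  classical
  induction A using Finset.induction with
  | empty => simp
  | insert a s ha ih =>
      rw [Finset.sum_insert ha, Finset.prod_insert ha, ← ih, monomial_mul, one_mul]

variable {m : ℕ}

/-- exponent vector of the image of the variable `v` under the flattened Rees map -/
noncomputable def gv (f : Fin m → Finset (Fin n)) : Fin m ⊕ Fin n → (Option (Fin n) →₀ ℕ)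
  | Sum.inl i => Finsupp.single none 1 + ∑ p ∈ f i, Finsupp.single (some p) 1
  | Sum.inr p => Finsupp.single (some p) 1

/-- image exponent of the monomial with exponent `d` -/
noncomputable def Gd (f : Fin m → Finset (Fin n)) (d : Fin m ⊕ Fin n →₀ ℕ) :
    Option (Fin n) →₀ ℕ :=
  d.sum fun v k => k • gv f v

lemma Gd_add (f : Fin m → Finset (Fin n)) (d e : Fin m ⊕ Fin n →₀ ℕ) :
    Gd f (d + e) = Gd f d + Gd f e :=
  Finsupp.sum_add_index' (by simp) (by simp [add_smul])

lemma gv_inl_apply (f : Fin m → Finset (Fin n)) (i : Fin m) (t : Option (Fin n)) :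
    gv f (Sum.inl i) t = t.elim 1 (fun p => if p ∈ f i then 1 else 0) := by
  classical
  cases t with
  | none => simp [gv, Finsupp.single_apply]
  | some p =>
      simp only [gv, Finsupp.add_apply, Finsupp.single_apply, Option.elim]
      rw [Finset.sum_apply']
      simp [Finsupp.single_apply]

lemma Gd_apply (f : Fin m → Finset (Fin n)) (d : Fin m ⊕ Fin n →₀ ℕ) (t : Option (Fin n)) :
    Gd f d t = ∑ v : Fin m ⊕ Fin n, d v * gv f v t := by
  classical
  rw [Gd, Finsupp.sum_fintype _ _ (by simp)]
  rw [Finsupp.finset_sum_apply]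
  simp [Finsupp.smul_apply]

lemma Gd_none (f : Fin m → Finset (Fin n)) (d : Fin m ⊕ Fin n →₀ ℕ) :
    Gd f d none = ∑ i : Fin m, d (Sum.inl i) := by
  rw [Gd_apply, Fintype.sum_sum_type]
  simp [gv_inl_apply, gv]

lemma Gd_some (f : Fin m → Finset (Fin n)) (d : Fin m ⊕ Fin n →₀ ℕ) (p : Fin n) :
    Gd f d (some p) = d (Sum.inr p)
      + ∑ i : Fin m, d (Sum.inl i) * (if p ∈ f i then 1 else 0) := by
  classical
  have h2 : ∑ q : Fin n, d (Sum.inr q) * gv f (Sum.inr q) (some p) = d (Sum.inr p) := by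
    rw [Finset.sum_eq_single p]
    · simp [gv, Finsupp.single_apply]
    · intro q _ hq
      simp [gv, Finsupp.single_apply, hq]
    · simp
  rw [Gd_apply, Fintype.sum_sum_type, h2, add_comm]
  congr 1
  simp [gv_inl_apply]

/-- the flattened Rees map -/
noncomputable def psiFlat (f : Fin m → Finset (Fin n)) :
    MvPolynomial (Fin m ⊕ Fin n) K →ₐ[K] MvPolynomial (Option (Fin n)) K :=
  aeval fun v => monomial (gv f v) 1

lemma psiFlat_monomial (f : Fin m → Finset (Fin n)) (d : Fin m ⊕ Fin n →₀ ℕ) (c : K) :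
    psiFlat f (monomial d c) = monomial (Gd f d) c := by
  rw [psiFlat, aeval_monomial]
  have : (d.prod fun v k => (monomial (gv f v) (1:K)) ^ k)
      = d.prod fun v k => monomial (k • gv f v) (1:K) := by
    apply Finsupp.prod_congr
    intro v _
    rw [monomial_pow, one_pow]
  rw [this, prod_monomial_one d _ (by simp) (by simp [add_smul]), Gd]
  rw [algebraMap_eq, C_mul_monomial, mul_one]

end LTAux

namespace LTAux

variable {K : Type*} [Field K] {n m : ℕ}

lemma monomial_X {σ : Type*} (t : σ) :
    (X t : MvPolynomial σ K) = monomial (Finsupp.single t 1) 1 := rfl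

lemma monomial_one_add_sum {σ α : Type*} (t : σ) (A : Finset α) (e : α → σ) :
    (monomial (Finsupp.single t 1 + ∑ a ∈ A, Finsupp.single (e a) 1) (1 : K)) =
      X t * ∏ a ∈ A, X (e a) := by
  have h : (monomial (Finsupp.single t 1 + ∑ a ∈ A, Finsupp.single (e a) 1) (1 : K)) =
      monomial (Finsupp.single t 1) 1 * monomial (∑ a ∈ A, Finsupp.single (e a) 1) 1 := by
    rw [monomial_mul, one_mul]
  rw [h, ← monomial_X, monomial_finset_sum]
  exact congrArg _ (Finset.prod_congr rfl fun p _ => (monomial_X _).symm)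

/-- indicator exponent over the sum type -/
noncomputable def indR (A : Finset (Fin n)) : Fin m ⊕ Fin n →₀ ℕ :=
  ∑ p ∈ A, Finsupp.single (Sum.inr p) 1

lemma indR_apply_inr (A : Finset (Fin n)) (q : Fin n) :
    (indR (m := m) A) (Sum.inr q) = if q ∈ A then 1 else 0 := by
  classical
  rw [indR, Finsupp.finset_sum_apply]
  simp [Finsupp.single_apply]

lemma indR_apply_inl (A : Finset (Fin n)) (i : Fin m) :
    (indR (m := m) A) (Sum.inl i) = 0 := by
  classical
  rw [indR, Finsupp.finset_sum_apply]
  simp [Finsupp.single_apply]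

lemma gv_inl_eq (f : Fin m → Finset (Fin n)) (i : Fin m) :
    gv f (Sum.inl i) = Finsupp.single (none : Option (Fin n)) 1
      + ∑ p ∈ f i, Finsupp.single (some p) 1 := rfl

lemma phi_monomial_lin (i : Fin m) (A : Finset (Fin n)) :
    sumAlgEquiv K (Fin m) (Fin n)
        (monomial (Finsupp.single (Sum.inl i) 1 + indR A) (1 : K)) =
      C (∏ p ∈ A, X p : MvPolynomial (Fin n) K) * X i := by
  rw [indR, monomial_one_add_sum, map_mul, map_prod]
  simp only [sumAlgEquiv_X_inl, sumAlgEquiv_X_inr, sumToIter_Xl, sumToIter_Xr]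
  rw [← map_prod C (fun p => (X p : MvPolynomial (Fin n) K)) A, mul_comm]

lemma Gd_lin_none (f : Fin m → Finset (Fin n)) (i : Fin m) (A : Finset (Fin n)) :
    Gd f (Finsupp.single (Sum.inl i) 1 + indR A) none = 1 := by
  classical
  rw [Gd_none]
  rw [Finset.sum_eq_single i]
  · simp [Finsupp.single_apply, indR_apply_inl]
  · intro j _ hj
    simp [Finsupp.single_apply, indR_apply_inl, Ne.symm hj]
  · simp

lemma Gd_lin_some (f : Fin m → Finset (Fin n)) (i : Fin m) (A : Finset (Fin n)) (p : Fin n) :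
    Gd f (Finsupp.single (Sum.inl i) 1 + indR A) (some p) =
      (if p ∈ A then 1 else 0) + (if p ∈ f i then 1 else 0) := by
  classical
  rw [Gd_some]
  congr 1
  · simp [Finsupp.single_apply, indR_apply_inr]
  · rw [Finset.sum_eq_single i]
    · simp [Finsupp.single_apply, indR_apply_inl]
    · intro j _ hj
      simp [Finsupp.single_apply, indR_apply_inl, Ne.symm hj]
    · simp

/-- the key `Gd`-equality behind the linear syzygy between generators `i₁` and `i₂` -/
lemma Gd_lin_eq (f : Fin m → Finset (Fin n)) (i₁ i₂ : Fin m) :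
    Gd f (Finsupp.single (Sum.inl i₁) 1 + indR (f i₂ \ f i₁)) =
      Gd f (Finsupp.single (Sum.inl i₂) 1 + indR (f i₁ \ f i₂)) := by
  classical
  ext t
  cases t with
  | none => rw [Gd_lin_none, Gd_lin_none]
  | some p =>
      rw [Gd_lin_some, Gd_lin_some]
      by_cases h1 : p ∈ f i₁ <;> by_cases h2 : p ∈ f i₂ <;> simp [h1, h2]

/-- the commuting square: `ψ ∘ Φ = Θ ∘ ψflat` -/
lemma square (f : Fin m → Finset (Fin n)) (q : MvPolynomial (Fin m ⊕ Fin n) K) :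
    aeval (R := MvPolynomial (Fin n) K)
        (fun i : Fin m => Polynomial.C (sqMon K (f i)) * Polynomial.X)
        (sumAlgEquiv K (Fin m) (Fin n) q) =
      optionEquivLeft K (Fin n) (psiFlat f q) := by
  have h : (((aeval (R := MvPolynomial (Fin n) K)
      (fun i : Fin m => Polynomial.C (sqMon K (f i)) * Polynomial.X)).restrictScalars K).comp
        (sumAlgEquiv K (Fin m) (Fin n)).toAlgHom)
      = ((optionEquivLeft K (Fin n)).toAlgHom.comp (psiFlat (K := K) f)) := by
    apply MvPolynomial.algHom_ext
    intro v
    cases v with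
    | inl i =>
        simp only [AlgHom.coe_comp, AlgHom.coe_restrictScalars', AlgEquiv.toAlgHom_eq_coe, AlgEquiv.coe_toAlgHom,
          AlgHom.coe_coe, Function.comp_apply, sumAlgEquiv_X_inl, sumToIter_Xl]
        rw [psiFlat, aeval_X, aeval_X, gv_inl_eq, monomial_one_add_sum, map_mul, map_prod,
          optionEquivLeft_X_none]
        have : ∀ p ∈ f i, optionEquivLeft K (Fin n) (X (some p)) = Polynomial.C (X p) :=
          fun p _ => optionEquivLeft_X_some K (Fin n) p
        rw [Finset.prod_congr rfl this, ← map_prod Polynomial.C (fun p => (X p : MvPolynomial (Fin n) K)) (f i)]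
        rw [sqMon, mul_comm]
    | inr p =>
        simp only [AlgHom.coe_comp, AlgHom.coe_restrictScalars', AlgEquiv.toAlgHom_eq_coe, AlgEquiv.coe_toAlgHom,
          AlgHom.coe_coe, Function.comp_apply, sumAlgEquiv_X_inr, sumToIter_Xr]
        rw [psiFlat, aeval_X, aeval_C, Polynomial.algebraMap_eq]
        have : (monomial (gv (n := n) f (Sum.inr p)) (1 : K)) = X (some p) := rfl
        rw [this, optionEquivLeft_X_some]
  exact congrArg (fun g => g q) (congrArg DFunLike.coe h)

end LTAux

namespace LTAux

variable {K : Type*} [Field K] {n s : ℕ}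

/-- the degree-one part of the Rees ideal -/
noncomputable def J1 (m : ℕ) (f : Fin m → Finset (Fin n)) (K : Type*) [Field K] :
    Set (MvPolynomial (Fin m) (MvPolynomial (Fin n) K)) :=
  {p | p ∈ RingHom.ker (MvPolynomial.aeval (R := MvPolynomial (Fin n) K)
      (fun i : Fin m => Polynomial.C (sqMon K (f i)) * Polynomial.X)).toRingHom ∧
    MvPolynomial.IsHomogeneous p 1}

local notation "ι'" => Sum.map (Fin.succ : Fin s → Fin (s+1)) (id : Fin n → Fin n)

lemma iota_inj : Function.Injective (ι') :=
  Sum.map_injective.mpr ⟨Fin.succ_injective s, fun _ _ h => h⟩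

lemma gv_iota (F : Fin (s+1) → Finset (Fin n)) (v : Fin s ⊕ Fin n) :
    gv F (ι' v) = gv (fun i => F i.succ) v := by
  cases v <;> rfl

lemma psiFlat_rename (F : Fin (s+1) → Finset (Fin n)) (q : MvPolynomial (Fin s ⊕ Fin n) K) :
    psiFlat F (rename (ι') q) = psiFlat (fun i => F i.succ) q := by
  have hfun : ((fun v => monomial (gv F v) (1 : K)) ∘ ι') =
      fun v => monomial (gv (fun i => F i.succ) v) (1 : K) :=
    funext fun v => by rw [Function.comp_apply, gv_iota]
  rw [psiFlat, aeval_rename, hfun, psiFlat]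

lemma phi_rename (q : MvPolynomial (Fin s ⊕ Fin n) K) :
    sumAlgEquiv K (Fin (s+1)) (Fin n) (rename (ι') q) =
      rename Fin.succ (sumAlgEquiv K (Fin s) (Fin n) q) := by
  have h : ((sumAlgEquiv K (Fin (s+1)) (Fin n)).toAlgHom.comp (rename (ι'))) =
      (((rename (Fin.succ : Fin s → Fin (s+1)) :
          MvPolynomial (Fin s) (MvPolynomial (Fin n) K) →ₐ[MvPolynomial (Fin n) K]
          MvPolynomial (Fin (s+1)) (MvPolynomial (Fin n) K)).restrictScalars K).comp
        (sumAlgEquiv K (Fin s) (Fin n)).toAlgHom) := by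
    apply MvPolynomial.algHom_ext
    intro v
    cases v with
    | inl i =>
        simp only [AlgHom.coe_comp, AlgHom.coe_restrictScalars', AlgEquiv.toAlgHom_eq_coe, AlgEquiv.coe_toAlgHom,
          AlgHom.coe_coe, Function.comp_apply, rename_X, sumAlgEquiv_X_inl, Sum.map_inl,
          id_eq, sumToIter_Xl]
    | inr p =>
        simp only [AlgHom.coe_comp, AlgHom.coe_restrictScalars', AlgEquiv.toAlgHom_eq_coe, AlgEquiv.coe_toAlgHom,
          AlgHom.coe_coe, Function.comp_apply, rename_X, sumAlgEquiv_X_inr, Sum.map_inr,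
          id_eq, sumToIter_Xr]
        rw [rename_C]
  exact congrArg (fun g => g q) (congrArg DFunLike.coe h)

lemma rename_mem_J1 (F : Fin (s+1) → Finset (Fin n))
    (q : MvPolynomial (Fin s) (MvPolynomial (Fin n) K))
    (hq : q ∈ J1 s (fun i => F i.succ) K) :
    rename Fin.succ q ∈ J1 (s+1) F K := by
  obtain ⟨hker, hhom⟩ := hq
  constructor
  · rw [RingHom.mem_ker] at hker ⊢
    show (aeval fun i : Fin (s+1) => Polynomial.C (sqMon K (F i)) * Polynomial.X)
      (rename Fin.succ q) = 0
    rw [aeval_rename]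
    exact hker
  · exact hhom.rename_isHomogeneous

lemma exists_preimage (d : Fin (s+1) ⊕ Fin n →₀ ℕ) (hd : d (Sum.inl 0) = 0) :
    ∃ e : Fin s ⊕ Fin n →₀ ℕ, Finsupp.mapDomain (ι') e = d := by
  classical
  refine ⟨Finsupp.comapDomain (ι') d (iota_inj.injOn), ?_⟩
  ext t
  rcases ht : t with (i | p)
  · rcases Fin.eq_zero_or_eq_succ i with hi | ⟨j, rfl⟩
    · subst hi
      rw [Finsupp.mapDomain_notin_range, hd]
      rintro ⟨(v | v), hv⟩ <;> simp at hv
    · rw [show (Sum.inl j.succ : Fin (s+1) ⊕ Fin n) = ι' (Sum.inl j) from rfl,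
        Finsupp.mapDomain_apply iota_inj, Finsupp.comapDomain_apply]
  · rw [show (Sum.inr p : Fin (s+1) ⊕ Fin n) = ι' (Sum.inr p) from rfl,
      Finsupp.mapDomain_apply iota_inj, Finsupp.comapDomain_apply]

/-- Base case: binomial relations not involving `T₀` come from the smaller ideal. -/
lemma base_case (F : Fin (s+1) → Finset (Fin n))
    (h' : IsLinearType (fun i : Fin s => sqMon K (F i.succ)))
    (d d' : Fin (s+1) ⊕ Fin n →₀ ℕ)
    (hd : d (Sum.inl 0) = 0) (hd' : d' (Sum.inl 0) = 0)
    (hG : Gd F d = Gd F d') :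
    sumAlgEquiv K (Fin (s+1)) (Fin n) (monomial d 1 - monomial d' 1) ∈
      Ideal.span (J1 (s+1) F K) := by
  classical
  obtain ⟨e, rfl⟩ := exists_preimage d hd
  obtain ⟨e', rfl⟩ := exists_preimage d' hd'
  set B : MvPolynomial (Fin s ⊕ Fin n) K := monomial e 1 - monomial e' 1 with hB
  have hren : rename (ι') B = monomial (Finsupp.mapDomain (ι') e) 1
      - monomial (Finsupp.mapDomain (ι') e') 1 := by
    rw [hB, map_sub, rename_monomial, rename_monomial]
  have hkerB : psiFlat (K := K) (fun i => F i.succ) B = 0 := by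
    rw [← psiFlat_rename, hren, map_sub, psiFlat_monomial, psiFlat_monomial, hG, sub_self]
  have hker2 : (aeval (R := MvPolynomial (Fin n) K)
      (fun i : Fin s => Polynomial.C (sqMon K (F i.succ)) * Polynomial.X))
      (sumAlgEquiv K (Fin s) (Fin n) B) = 0 := by
    rw [square, hkerB, map_zero]
  have hmem : sumAlgEquiv K (Fin s) (Fin n) B ∈
      Ideal.span (J1 s (fun i => F i.succ) K) := by
    have h'' := h'
    rw [IsLinearType] at h''
    rw [J1, ← h'']
    exact RingHom.mem_ker.mpr hker2
  rw [← hren, phi_rename]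
  have h1 : rename (Fin.succ : Fin s → Fin (s+1)) (sumAlgEquiv K (Fin s) (Fin n) B) ∈
      Ideal.map (rename (Fin.succ : Fin s → Fin (s+1)) :
        MvPolynomial (Fin s) (MvPolynomial (Fin n) K) →ₐ[MvPolynomial (Fin n) K]
        MvPolynomial (Fin (s+1)) (MvPolynomial (Fin n) K))
        (Ideal.span (J1 s (fun i => F i.succ) K)) := Ideal.mem_map_of_mem _ hmem
  rw [Ideal.map_span] at h1
  refine Ideal.span_mono ?_ h1
  rintro _ ⟨q, hq, rfl⟩
  exact rename_mem_J1 F q hq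

end LTAux

namespace LTAux

variable {K : Type*} [Field K] {n s : ℕ}

lemma lin_syz_mem (F : Fin (s+1) → Finset (Fin n)) (i₁ i₂ : Fin (s+1)) :
    sumAlgEquiv K (Fin (s+1)) (Fin n)
      (monomial (Finsupp.single (Sum.inl i₁) 1 + indR (F i₂ \ F i₁)) (1 : K)
        - monomial (Finsupp.single (Sum.inl i₂) 1 + indR (F i₁ \ F i₂)) 1)
      ∈ J1 (s+1) F K := by
  constructor
  · rw [RingHom.mem_ker]
    show (aeval fun i : Fin (s+1) => Polynomial.C (sqMon K (F i)) * Polynomial.X) _ = 0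
    rw [square, map_sub, psiFlat_monomial, psiFlat_monomial, Gd_lin_eq, sub_self, map_zero]
  · rw [map_sub, phi_monomial_lin, phi_monomial_lin]
    have hh : ∀ (c : MvPolynomial (Fin n) K) (i : Fin (s+1)),
        MvPolynomial.IsHomogeneous (C c * X i :
          MvPolynomial (Fin (s+1)) (MvPolynomial (Fin n) K)) 1 := by
      intro c i
      simpa using (isHomogeneous_C _ c).mul (isHomogeneous_X _ i)
    exact (hh _ _).sub (hh _ _)

lemma sum_single_inl (i₀ : Fin (s+1)) :
    (∑ i : Fin (s+1), (Finsupp.single (Sum.inl i₀ : Fin (s+1) ⊕ Fin n) 1) (Sum.inl i)) = 1 := by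
  classical
  rw [Finset.sum_eq_single i₀]
  · simp
  · intro j _ hj
    simp [Finsupp.single_apply, (Ne.symm hj : ¬ i₀ = j)]
  · simp

/-- The combinatorial heart: using the M-element property, find a generator `j₀`
appearing in `d'` such that all variables of `F 0` missing from `F j₀` appear in
the `x`-part of `d'`. -/
lemma exists_good (F : Fin (s+1) → Finset (Fin n)) (hM : IsMElement F 0)
    (d d' : Fin (s+1) ⊕ Fin n →₀ ℕ) (hG : Gd F d = Gd F d')
    (hd0 : 0 < d (Sum.inl 0)) (hd'0 : d' (Sum.inl 0) = 0) :
    ∃ j₀ : Fin (s+1), 0 < d' (Sum.inl j₀) ∧ ∀ p ∈ F 0 \ F j₀, 1 ≤ d' (Sum.inr p) := by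
  classical
  obtain ⟨r, x, hxinj, hF0, hprop⟩ := hM
  have hsum : ∑ i : Fin (s+1), d' (Sum.inl i) = ∑ i : Fin (s+1), d (Sum.inl i) := by
    rw [← Gd_none, ← Gd_none, hG]
  have hex : ∃ j, 0 < d' (Sum.inl j) := by
    by_contra hcon
    push_neg at hcon
    have : ∑ i : Fin (s+1), d' (Sum.inl i) = 0 :=
      Finset.sum_eq_zero fun i _ => Nat.le_zero.mp (hcon i)
    have h2 : d (Sum.inl 0) ≤ ∑ i : Fin (s+1), d (Sum.inl i) :=
      Finset.single_le_sum (f := fun i : Fin (s+1) => d (Sum.inl i))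
        (fun i _ => Nat.zero_le _) (Finset.mem_univ (0 : Fin (s+1)))
    omega
  have key : ∀ p, p ∈ F 0 → (∀ j, 0 < d' (Sum.inl j) → p ∉ F j) → 1 ≤ d' (Sum.inr p) := by
    intro p hp hnone
    have h1 : 0 < Gd F d (some p) := by
      rw [Gd_some]
      have h3 : d (Sum.inl 0) * (if p ∈ F 0 then 1 else 0) ≤
          ∑ i : Fin (s+1), d (Sum.inl i) * (if p ∈ F i then 1 else 0) :=
        Finset.single_le_sum (f := fun i : Fin (s+1) => d (Sum.inl i) * (if p ∈ F i then 1 else 0))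
          (fun i _ => Nat.zero_le _) (Finset.mem_univ (0 : Fin (s+1)))
      simp only [hp, if_true, mul_one] at h3
      omega
    have h2 : Gd F d' (some p) = d' (Sum.inr p) := by
      rw [Gd_some]
      have h4 : ∀ i ∈ Finset.univ, d' (Sum.inl i) * (if p ∈ F i then 1 else 0) = 0 := by
        intro i _
        rcases Nat.eq_zero_or_pos (d' (Sum.inl i)) with h | h
        · simp [h]
        · simp [hnone i h]
      rw [Finset.sum_eq_zero h4, add_zero]
    rw [hG, h2] at h1
    omega
  set P : Finset (Fin r) := Finset.univ.filter (fun k => ∃ j, 0 < d' (Sum.inl j) ∧ x k ∈ F j)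
    with hP
  by_cases hPne : P.Nonempty
  · obtain ⟨j₀, hj₀pos, hkj₀⟩ := (Finset.mem_filter.mp (P.min'_mem hPne)).2
    refine ⟨j₀, hj₀pos, ?_⟩
    intro p hp
    rw [Finset.mem_sdiff] at hp
    obtain ⟨hp0, hpj₀⟩ := hp
    obtain ⟨k', -, rfl⟩ := Finset.mem_image.mp (hF0 ▸ hp0)
    have hj₀ne : j₀ ≠ 0 := by
      intro h
      rw [h, hd'0] at hj₀pos
      omega
    have hk'P : k' ∉ P := by
      intro hmem
      exact hpj₀ (hprop (P.min' hPne) j₀ hj₀ne hkj₀ k' (P.min'_le k' hmem))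
    apply key _ hp0
    intro j hj hxk'
    exact hk'P (Finset.mem_filter.mpr ⟨Finset.mem_univ _, j, hj, hxk'⟩)
  · obtain ⟨j₀, hj₀⟩ := hex
    refine ⟨j₀, hj₀, ?_⟩
    intro p hp
    rw [Finset.mem_sdiff] at hp
    obtain ⟨hp0, -⟩ := hp
    obtain ⟨k', -, rfl⟩ := Finset.mem_image.mp (hF0 ▸ hp0)
    apply key _ hp0
    intro j hj hxk'
    exact hPne ⟨k', Finset.mem_filter.mpr ⟨Finset.mem_univ _, j, hj, hxk'⟩⟩

end LTAux

namespace LTAux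

variable {K : Type*} [Field K] {n s : ℕ}

/-- Main lemma: every binomial relation lies in the ideal generated by the
degree-one part of the Rees ideal. -/
lemma key_binomial (F : Fin (s+1) → Finset (Fin n)) (hM : IsMElement F 0)
    (h' : IsLinearType (fun i : Fin s => sqMon K (F i.succ))) :
    ∀ N : ℕ, ∀ d d' : Fin (s+1) ⊕ Fin n →₀ ℕ,
      (∑ i : Fin (s+1), d (Sum.inl i)) ≤ N → Gd F d = Gd F d' →
      sumAlgEquiv K (Fin (s+1)) (Fin n) (monomial d 1 - monomial d' 1) ∈
        Ideal.span (J1 (s+1) F K) := by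
  intro N
  induction N with
  | zero =>
      intro d d' hN hG
      have hsum : ∑ i : Fin (s+1), d' (Sum.inl i) = ∑ i : Fin (s+1), d (Sum.inl i) := by
        rw [← Gd_none, ← Gd_none, hG]
      have hd : d (Sum.inl 0) = 0 := by
        have h2 : d (Sum.inl 0) ≤ ∑ i : Fin (s+1), d (Sum.inl i) :=
          Finset.single_le_sum (f := fun i : Fin (s+1) => d (Sum.inl i))
            (fun i _ => Nat.zero_le _) (Finset.mem_univ (0 : Fin (s+1)))
        omega
      have hd' : d' (Sum.inl 0) = 0 := by
        have h2 : d' (Sum.inl 0) ≤ ∑ i : Fin (s+1), d' (Sum.inl i) :=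
          Finset.single_le_sum (f := fun i : Fin (s+1) => d' (Sum.inl i))
            (fun i _ => Nat.zero_le _) (Finset.mem_univ (0 : Fin (s+1)))
        omega
      exact base_case F h' d d' hd hd' hG
  | succ N ih =>
      intro d d' hN hG
      have hsum : ∑ i : Fin (s+1), d' (Sum.inl i) = ∑ i : Fin (s+1), d (Sum.inl i) := by
        rw [← Gd_none, ← Gd_none, hG]
      -- Case A: both involve T₀ — cancel T₀ and use induction.
      have hA : ∀ e e' : Fin (s+1) ⊕ Fin n →₀ ℕ, (∑ i : Fin (s+1), e (Sum.inl i)) ≤ N + 1 →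
          Gd F e = Gd F e' → 0 < e (Sum.inl 0) → 0 < e' (Sum.inl 0) →
          sumAlgEquiv K (Fin (s+1)) (Fin n) (monomial e 1 - monomial e' 1) ∈
            Ideal.span (J1 (s+1) F K) := by
        intro e e' hle hGe he he'
        obtain ⟨e₁, he₁⟩ : ∃ e₁,
            e₁ + Finsupp.single (Sum.inl (0 : Fin (s+1)) : Fin (s+1) ⊕ Fin n) 1 = e :=
          ⟨_, tsub_add_cancel_of_le (Finsupp.single_le_iff.mpr he)⟩
        obtain ⟨e'₁, he'₁⟩ : ∃ e'₁,
            e'₁ + Finsupp.single (Sum.inl (0 : Fin (s+1)) : Fin (s+1) ⊕ Fin n) 1 = e' :=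
          ⟨_, tsub_add_cancel_of_le (Finsupp.single_le_iff.mpr he')⟩
        have hGe₁ : Gd F e₁ = Gd F e'₁ := by
          have hx : Gd F e₁ + Gd F (Finsupp.single (Sum.inl 0) 1)
              = Gd F e'₁ + Gd F (Finsupp.single (Sum.inl 0) 1) := by
            rw [← Gd_add, ← Gd_add, he₁, he'₁, hGe]
          ext t
          have := congrArg (fun w => w t) hx
          simp only [Finsupp.add_apply] at this
          omega
        have hsum₁ : (∑ i : Fin (s+1), e₁ (Sum.inl i)) ≤ N := by
          have hx : (∑ i : Fin (s+1), e₁ (Sum.inl i)) +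
              (∑ i : Fin (s+1),
                (Finsupp.single (Sum.inl (0 : Fin (s+1)) : Fin (s+1) ⊕ Fin n) 1) (Sum.inl i)) =
              ∑ i : Fin (s+1), e (Sum.inl i) := by
            rw [← Finset.sum_add_distrib]
            exact Finset.sum_congr rfl fun i _ => by rw [← Finsupp.add_apply, he₁]
          rw [sum_single_inl (n := n) 0] at hx
          omega
        have hrec := ih e₁ e'₁ hsum₁ hGe₁
        have hadd : Finsupp.single (Sum.inl (0 : Fin (s+1)) : Fin (s+1) ⊕ Fin n) 1 + e₁ = e := by
          exact (add_comm _ e₁).trans he₁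
        have hadd' : Finsupp.single (Sum.inl (0 : Fin (s+1)) : Fin (s+1) ⊕ Fin n) 1 + e'₁ = e' := by
          exact (add_comm _ e'₁).trans he'₁
        have hm : monomial e (1 : K) = X (Sum.inl 0) * monomial e₁ 1 := by
          rw [monomial_X, monomial_mul, one_mul, hadd]
        have hm' : monomial e' (1 : K) = X (Sum.inl 0) * monomial e'₁ 1 := by
          rw [monomial_X, monomial_mul, one_mul, hadd']
        rw [hm, hm', ← mul_sub, map_mul]
        exact Ideal.mul_mem_left _ _ hrec
      -- Case C: only the left monomial involves `T₀` — use the M-element swap.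
      have hC : ∀ e e' : Fin (s+1) ⊕ Fin n →₀ ℕ, (∑ i : Fin (s+1), e (Sum.inl i)) ≤ N + 1 →
          Gd F e = Gd F e' → 0 < e (Sum.inl 0) → e' (Sum.inl 0) = 0 →
          sumAlgEquiv K (Fin (s+1)) (Fin n) (monomial e 1 - monomial e' 1) ∈
            Ideal.span (J1 (s+1) F K) := by
        intro e e' hle hGe he he'
        obtain ⟨j₀, hj₀, hcov⟩ := exists_good F hM e e' hGe he he'
        have hwle : Finsupp.single (Sum.inl j₀ : Fin (s+1) ⊕ Fin n) 1 + indR (F 0 \ F j₀) ≤ e' := by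
          rw [Finsupp.le_def]
          intro t
          rcases t with i | p
          · rcases eq_or_ne i j₀ with rfl | hne
            · simp [Finsupp.single_apply, indR_apply_inl]; exact hj₀
            · simp [Finsupp.single_apply, indR_apply_inl, (Ne.symm hne : ¬ j₀ = i)]
          · by_cases hp : p ∈ F 0 \ F j₀
            · simpa [Finsupp.single_apply, indR_apply_inr, hp] using hcov p hp
            · simp [Finsupp.single_apply, indR_apply_inr, hp]
        obtain ⟨c, hc⟩ : ∃ c, c +
            (Finsupp.single (Sum.inl j₀ : Fin (s+1) ⊕ Fin n) 1 + indR (F 0 \ F j₀)) = e' :=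
          ⟨_, tsub_add_cancel_of_le hwle⟩
        have hGe'' : Gd F (c +
            (Finsupp.single (Sum.inl (0 : Fin (s+1)) : Fin (s+1) ⊕ Fin n) 1
              + indR (F j₀ \ F 0))) = Gd F e' := by
          have hx1 : Gd F (c + (Finsupp.single (Sum.inl (0 : Fin (s+1)) : Fin (s+1) ⊕ Fin n) 1
              + indR (F j₀ \ F 0))) = Gd F c +
              Gd F (Finsupp.single (Sum.inl (0 : Fin (s+1)) : Fin (s+1) ⊕ Fin n) 1
                + indR (F j₀ \ F 0)) := Gd_add _ _ _
          have hx2 : Gd F e' = Gd F c +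
              Gd F (Finsupp.single (Sum.inl j₀ : Fin (s+1) ⊕ Fin n) 1
                + indR (F 0 \ F j₀)) := by
            rw [← hc]; exact Gd_add _ _ _
          rw [hx1, hx2, Gd_lin_eq]
        have he''0 : 0 < ((c +
            (Finsupp.single (Sum.inl (0 : Fin (s+1)) : Fin (s+1) ⊕ Fin n) 1
              + indR (F j₀ \ F 0)) : Fin (s+1) ⊕ Fin n →₀ ℕ)) (Sum.inl 0) := by
          simp [Finsupp.add_apply, Finsupp.single_apply, indR_apply_inl]
        have hsplit : monomial e (1 : K) - monomial e' 1 =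
            (monomial e 1 - monomial (c +
              (Finsupp.single (Sum.inl (0 : Fin (s+1)) : Fin (s+1) ⊕ Fin n) 1
                + indR (F j₀ \ F 0))) 1) +
              monomial c 1 *
                (monomial (Finsupp.single (Sum.inl (0 : Fin (s+1)) : Fin (s+1) ⊕ Fin n) 1
                    + indR (F j₀ \ F 0)) 1
                  - monomial (Finsupp.single (Sum.inl j₀ : Fin (s+1) ⊕ Fin n) 1
                    + indR (F 0 \ F j₀)) 1) := by
          rw [mul_sub, monomial_mul, one_mul, monomial_mul, one_mul, hc]
          ring
        rw [hsplit, map_add, map_mul]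
        refine Ideal.add_mem _ ?_ (Ideal.mul_mem_left _ _ (Ideal.subset_span ?_))
        · exact hA e _ hle (hGe.trans hGe''.symm) he he''0
        · exact lin_syz_mem F 0 j₀
      rcases Nat.eq_zero_or_pos (d (Sum.inl 0)) with h0 | h0 <;>
        rcases Nat.eq_zero_or_pos (d' (Sum.inl 0)) with h0' | h0'
      · exact base_case F h' d d' h0 h0' hG
      · have hmem := hC d' d (by omega) hG.symm h0' h0
        have hx : sumAlgEquiv K (Fin (s+1)) (Fin n) (monomial d (1 : K) - monomial d' 1) =
            - sumAlgEquiv K (Fin (s+1)) (Fin n) (monomial d' (1 : K) - monomial d 1) := by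
          rw [map_sub, map_sub]
          ring
        rw [hx]
        exact neg_mem hmem
      · exact hC d d' hN hG h0 h0'
      · exact hA d d' hN hG h0 h0'

end LTAux

namespace LTAux

variable {K : Type*} [Field K] {n s m : ℕ}

lemma coeff_psiFlat (f : Fin m → Finset (Fin n)) (q : MvPolynomial (Fin m ⊕ Fin n) K)
    (t : Option (Fin n) →₀ ℕ) :
    coeff t (psiFlat f q) =
      ∑ d ∈ q.support.filter (fun d => Gd f d = t), coeff d q := by
  classical
  conv_lhs => rw [← support_sum_monomial_coeff q]
  rw [map_sum, coeff_sum]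
  rw [Finset.sum_filter]
  refine Finset.sum_congr rfl fun d _ => ?_
  rw [psiFlat_monomial, coeff_monomial]

lemma flat_to_span (F : Fin (s+1) → Finset (Fin n)) (hM : IsMElement F 0)
    (h' : IsLinearType (fun i : Fin s => sqMon K (F i.succ))) :
    ∀ k : ℕ, ∀ q : MvPolynomial (Fin (s+1) ⊕ Fin n) K, q.support.card ≤ k →
      psiFlat F q = 0 →
      sumAlgEquiv K (Fin (s+1)) (Fin n) q ∈ Ideal.span (J1 (s+1) F K) := by
  classical
  intro k
  induction k with
  | zero =>
      intro q hcard _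
      have hq : q = 0 := by
        rw [← MvPolynomial.support_eq_empty]
        exact Finset.card_eq_zero.mp (Nat.le_zero.mp hcard)
      rw [hq, map_zero]
      exact Ideal.zero_mem _
  | succ k ihk =>
      intro q hcard hker
      by_cases hq0 : q = 0
      · rw [hq0, map_zero]
        exact Ideal.zero_mem _
      · obtain ⟨d₀, hd₀⟩ := Finset.nonempty_of_ne_empty
          (fun h => hq0 (MvPolynomial.support_eq_empty.mp h))
        have hcoeffsum :
            ∑ d ∈ q.support.filter (fun d => Gd F d = Gd F d₀), coeff d q = 0 := by
          have hx := coeff_psiFlat F q (Gd F d₀)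
          rw [hker, coeff_zero] at hx
          exact hx.symm
        set S : MvPolynomial (Fin (s+1) ⊕ Fin n) K :=
          ∑ d ∈ q.support.filter (fun d => Gd F d = Gd F d₀), monomial d (coeff d q) with hS
        have hSmem : sumAlgEquiv K (Fin (s+1)) (Fin n) S ∈ Ideal.span (J1 (s+1) F K) := by
          have h1 : ∀ d, C (coeff d q) * (monomial d (1:K) - monomial d₀ 1) =
              monomial d (coeff d q) - monomial d₀ (coeff d q) := by
            intro d
            rw [mul_sub, C_mul_monomial, C_mul_monomial, mul_one]
          have hrw : S = ∑ d ∈ q.support.filter (fun d => Gd F d = Gd F d₀),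
              C (coeff d q) * (monomial d 1 - monomial d₀ 1) := by
            rw [Finset.sum_congr rfl (fun d _ => h1 d), Finset.sum_sub_distrib,
              ← map_sum (monomial d₀) (fun d => coeff d q) _, hcoeffsum, monomial_zero, sub_zero,
              hS]
          rw [hrw, map_sum]
          refine Ideal.sum_mem _ fun d hd => ?_
          rw [map_mul]
          exact Ideal.mul_mem_left _ _
            (key_binomial F hM h' (∑ i : Fin (s+1), d (Sum.inl i)) d d₀ le_rfl
              (Finset.mem_filter.mp hd).2)
        have hcoeffS : ∀ d, coeff d S =
            if d ∈ q.support.filter (fun d => Gd F d = Gd F d₀) then coeff d q else 0 := by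
          intro d
          rw [hS, coeff_sum]
          rw [Finset.sum_congr rfl (fun e _ => coeff_monomial d e (coeff e q))]
          exact Finset.sum_ite_eq' _ d (fun e => coeff e q)
        have hd₀Fib : d₀ ∈ q.support.filter (fun d => Gd F d = Gd F d₀) :=
          Finset.mem_filter.mpr ⟨hd₀, rfl⟩
        have hsub : (q - S).support ⊆ q.support.erase d₀ := by
          intro d hd
          rw [MvPolynomial.mem_support_iff] at hd
          rw [coeff_sub, hcoeffS d] at hd
          by_cases hdF : d ∈ q.support.filter (fun d => Gd F d = Gd F d₀)
          · rw [if_pos hdF, sub_self] at hd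
            exact absurd rfl hd
          · rw [if_neg hdF, sub_zero] at hd
            refine Finset.mem_erase.mpr ⟨?_, MvPolynomial.mem_support_iff.mpr hd⟩
            rintro rfl
            exact hdF hd₀Fib
        have hcard2 : (q - S).support.card ≤ k := by
          have h3 := Finset.card_le_card hsub
          rw [Finset.card_erase_of_mem hd₀] at h3
          have h4 : 1 ≤ q.support.card := Finset.card_pos.mpr ⟨d₀, hd₀⟩
          omega
        have hkerS : psiFlat F S = 0 := by
          rw [hS, map_sum]
          have h5 : ∀ d ∈ q.support.filter (fun d => Gd F d = Gd F d₀),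
              psiFlat F (monomial d (coeff d q)) = monomial (Gd F d₀) (coeff d q) := by
            intro d hd
            rw [psiFlat_monomial, (Finset.mem_filter.mp hd).2]
          rw [Finset.sum_congr rfl h5, ← map_sum (monomial (Gd F d₀)) (fun d => coeff d q) _,
            hcoeffsum, monomial_zero]
        have hker2 : psiFlat F (q - S) = 0 := by
          rw [map_sub, hker, hkerS, sub_zero]
        have hmem2 := ihk (q - S) hcard2 hker2
        have hfin : sumAlgEquiv K (Fin (s+1)) (Fin n) q =
            sumAlgEquiv K (Fin (s+1)) (Fin n) (q - S) + sumAlgEquiv K (Fin (s+1)) (Fin n) S := by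
          rw [← map_add, sub_add_cancel]
        rw [hfin]
        exact Ideal.add_mem _ hmem2 hSmem

end LTAux


/-- Adding an M-element preserves linear type: if `I = (f 0, f 1, …, f s)` is a
squarefree monomial ideal minimally generated, `f 0` is an M-element of `I`, and
`I' = (f 1, …, f s)` is of linear type, then so is `I`. -/
theorem stmt2 {K : Type*} [Field K] {n s : ℕ} (F : Fin (s + 1) → Finset (Fin n))
    (hmin : ∀ i j : Fin (s + 1), i ≠ j → ¬ F i ⊆ F j)
    (hM : IsMElement F 0)
    (h' : IsLinearType (fun i : Fin s => sqMon K (F i.succ))) :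
    IsLinearType (fun i : Fin (s + 1) => sqMon K (F i)) := by
  classical
  show RingHom.ker (MvPolynomial.aeval (R := MvPolynomial (Fin n) K)
      (fun i : Fin (s+1) => Polynomial.C (sqMon K (F i)) * Polynomial.X)).toRingHom =
    Ideal.span (LTAux.J1 (s+1) F K)
  refine le_antisymm ?_ ?_
  · intro p hp
    have hker : (MvPolynomial.aeval (R := MvPolynomial (Fin n) K)
        (fun i : Fin (s+1) => Polynomial.C (sqMon K (F i)) * Polynomial.X)) p = 0 :=
      RingHom.mem_ker.mp hp
    set q := (MvPolynomial.sumAlgEquiv K (Fin (s+1)) (Fin n)).symm p with hqdef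
    have hq : MvPolynomial.sumAlgEquiv K (Fin (s+1)) (Fin n) q = p :=
      (MvPolynomial.sumAlgEquiv K (Fin (s+1)) (Fin n)).apply_symm_apply p
    have hflat : LTAux.psiFlat F q = 0 := by
      have hsq := LTAux.square F q
      rw [hq, hker] at hsq
      apply (MvPolynomial.optionEquivLeft K (Fin n)).injective
      rw [← hsq, map_zero]
    have hmem := LTAux.flat_to_span F hM h' q.support.card q le_rfl hflat
    rw [hq] at hmem
    exact hmem
  · rw [Ideal.span_le]
    intro p hp
    exact hp.1
end

section
/- If I is a squarefree monomial ideal generated by an M-sequence of monomials f_1,...,f_s, then I is of linear type. -/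
namespace LinTypeAux

open MvPolynomial Finsupp

variable {K : Type*} [Field K] {n s : ℕ}

noncomputable section

/-- exponent vector of `sqMon K F'` -/
def chi (F' : Finset (Fin n)) : Fin n →₀ ℕ := ∑ k ∈ F', Finsupp.single k 1

lemma chi_apply (F' : Finset (Fin n)) (c : Fin n) :
    chi F' c = if c ∈ F' then 1 else 0 := by
  classical
  rw [chi, Finsupp.finset_sum_apply]
  simp_rw [Finsupp.single_apply]
  exact Finset.sum_ite_eq' F' c (fun _ => 1)

lemma sqMon_eq (F' : Finset (Fin n)) : sqMon K F' = monomial (chi F') 1 := by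
  classical
  unfold sqMon chi
  induction F' using Finset.induction_on with
  | empty => simp
  | @insert k t hk ih =>
      rw [Finset.prod_insert hk, Finset.sum_insert hk, ih,
        show (X k : MvPolynomial (Fin n) K) = monomial (Finsupp.single k 1) 1 by
          rw [← X_pow_eq_monomial, pow_one],
        monomial_mul, one_mul]

variable (F : Fin s → Finset (Fin n))

def Phi (a : Fin s →₀ ℕ) : Fin n →₀ ℕ := a.sum fun i m => m • chi (F i)

lemma Phi_add (a b : Fin s →₀ ℕ) : Phi F (a + b) = Phi F a + Phi F b :=
  Finsupp.sum_add_index' (by simp) (fun i m m' => add_smul m m' _)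

lemma Phi_single (i : Fin s) (m : ℕ) : Phi F (Finsupp.single i m) = m • chi (F i) :=
  Finsupp.sum_single_index (by simp)

lemma Phi_apply (a : Fin s →₀ ℕ) (c : Fin n) :
    Phi F a c = a.sum fun i m => m * chi (F i) c := by
  rw [Phi, Finsupp.sum_apply]
  simp [Finsupp.sum]

lemma Phi_zero : Phi F 0 = 0 := by simp [Phi]

lemma deg_add (a b : Fin s →₀ ℕ) : (a + b).degree = a.degree + b.degree := by
  show (a+b).sum (fun _ m => m) = a.sum (fun _ m => m) + b.sum (fun _ m => m)
  exact Finsupp.sum_add_index' (fun _ => rfl) (fun _ m m' => rfl)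

lemma deg_single (i : Fin s) (m : ℕ) : (Finsupp.single i m).degree = m := by
  show (Finsupp.single i m).sum (fun _ m => m) = m
  exact Finsupp.sum_single_index rfl

lemma addcancel {x y z : Fin n →₀ ℕ} (h : x + z = y + z) : x = y := by
  ext c
  have := DFunLike.congr_fun h c
  simp only [Finsupp.add_apply] at this
  omega

def phi : MvPolynomial (Fin s) (MvPolynomial (Fin n) K) →ₐ[MvPolynomial (Fin n) K]
    Polynomial (MvPolynomial (Fin n) K) :=
  aeval fun i => Polynomial.C (sqMon K (F i)) * Polynomial.X

def mon (a : Fin s →₀ ℕ) (u : Fin n →₀ ℕ) (c : K) :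
    MvPolynomial (Fin s) (MvPolynomial (Fin n) K) :=
  monomial a (monomial u c)

lemma mon_mul (a b : Fin s →₀ ℕ) (u v : Fin n →₀ ℕ) (c d : K) :
    mon a u c * mon b v d = mon (a + b) (u + v) (c * d) := by
  simp [mon, monomial_mul]

lemma prod_monomial {ι : Type*} (t : Finset ι) (g : ι → (Fin n →₀ ℕ)) :
    (∏ i ∈ t, (monomial (g i) (1:K))) = monomial (∑ i ∈ t, g i) 1 := by
  classical
  induction t using Finset.induction_on with
  | empty => simp
  | insert _ _ h ih => rw [Finset.prod_insert h, Finset.sum_insert h, ih, monomial_mul, one_mul]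

lemma phi_mon (a : Fin s →₀ ℕ) (u : Fin n →₀ ℕ) (c : K) :
    phi F (mon a u c) =
      Polynomial.C (monomial (u + Phi F a) c) * Polynomial.X ^ a.degree := by
  rw [mon, phi, aeval_monomial]
  have h1 : ∀ i ∈ a.support,
      (Polynomial.C (sqMon K (F i)) * Polynomial.X) ^ (a i)
        = Polynomial.C (monomial ((a i) • chi (F i)) (1:K)) * Polynomial.X ^ (a i) := by
    intro i _
    rw [mul_pow, ← Polynomial.C_pow, sqMon_eq, monomial_pow, one_pow]
  rw [Finsupp.prod, Finset.prod_congr rfl h1, Finset.prod_mul_distrib, ← map_prod,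
    prod_monomial, Finset.prod_pow_eq_pow_sum]
  have hP : (∑ i ∈ a.support, a i • chi (F i)) = Phi F a := rfl
  have hdeg : (∑ i ∈ a.support, a i) = a.degree := rfl
  rw [hP, hdeg, Polynomial.algebraMap_eq, ← mul_assoc, ← Polynomial.C_mul, monomial_mul,
    mul_one]

def J1 : Ideal (MvPolynomial (Fin s) (MvPolynomial (Fin n) K)) :=
  Ideal.span {p | p ∈ RingHom.ker (phi F).toRingHom ∧ MvPolynomial.IsHomogeneous p 1}

lemma smul_mon (k : K) (a : Fin s →₀ ℕ) (u : Fin n →₀ ℕ) (c : K) :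
    k • mon a u c = mon a u (k * c) := by
  simp [mon, smul_monomial, smul_eq_mul]

lemma sub_mem_J1_deg_one (i j : Fin s) (u v : Fin n →₀ ℕ)
    (h : u + chi (F i) = v + chi (F j)) :
    mon (Finsupp.single i 1) u (1:K) - mon (Finsupp.single j 1) v 1 ∈ J1 F := by
  apply Ideal.subset_span
  constructor
  · show phi F _ = 0
    rw [map_sub, phi_mon, phi_mon, Phi_single, Phi_single, one_smul, one_smul,
      deg_single, deg_single, h, sub_self]
  · exact IsHomogeneous.sub (isHomogeneous_monomial _ (deg_single i 1))
      (isHomogeneous_monomial _ (deg_single j 1))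

lemma cancel_step {d : ℕ}
    (IH : ∀ (a b : Fin s →₀ ℕ) (u v : Fin n →₀ ℕ), a.degree = d → b.degree = d →
      u + Phi F a = v + Phi F b → mon a u (1:K) - mon b v 1 ∈ J1 F)
    {a b : Fin s →₀ ℕ} {u v : Fin n →₀ ℕ} {i : Fin s}
    (hai : 0 < a i) (hbi : 0 < b i) (ha : a.degree = d + 1) (hb : b.degree = d + 1)
    (huv : u + Phi F a = v + Phi F b) :
    mon a u (1:K) - mon b v 1 ∈ J1 F := by
  have hsa : Finsupp.single i 1 ≤ a := by rwa [Finsupp.single_le_iff]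
  have hsb : Finsupp.single i 1 ≤ b := by rwa [Finsupp.single_le_iff]
  have ha' : (a - Finsupp.single i 1) + Finsupp.single i 1 = a := tsub_add_cancel_of_le hsa
  have hb' : (b - Finsupp.single i 1) + Finsupp.single i 1 = b := tsub_add_cancel_of_le hsb
  have hda : (a - Finsupp.single i 1).degree = d := by
    have := congrArg Finsupp.degree ha'
    rw [deg_add, deg_single] at this
    omega
  have hdb : (b - Finsupp.single i 1).degree = d := by
    have := congrArg Finsupp.degree hb'
    rw [deg_add, deg_single] at this
    omega
  have heq : u + Phi F (a - Finsupp.single i 1) = v + Phi F (b - Finsupp.single i 1) := by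
    apply addcancel (z := chi (F i))
    have hPa : Phi F (a - Finsupp.single i 1) + chi (F i) = Phi F a := by
      conv_rhs => rw [← ha']
      rw [Phi_add, Phi_single, one_smul]
    have hPb : Phi F (b - Finsupp.single i 1) + chi (F i) = Phi F b := by
      conv_rhs => rw [← hb']
      rw [Phi_add, Phi_single, one_smul]
    rw [add_assoc, add_assoc, hPa, hPb]
    exact huv
  have hmem := IH _ _ _ _ hda hdb heq
  have hmul : (mon (a - Finsupp.single i 1) u (1:K) - mon (b - Finsupp.single i 1) v 1)
      * mon (Finsupp.single i 1) 0 1 = mon a u 1 - mon b v 1 := by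
    rw [sub_mul, mon_mul, mon_mul, ha', hb', add_zero, add_zero, one_mul]
  rw [← hmul]
  exact Ideal.mul_mem_right _ _ hmem

lemma keyStep
    (hM : ∀ i : Fin s, IsMElement (fun j : {j : Fin s // i ≤ j} => F j.1) ⟨i, le_refl i⟩)
    {d : ℕ}
    (IH : ∀ (a b : Fin s →₀ ℕ) (u v : Fin n →₀ ℕ), a.degree = d → b.degree = d →
      u + Phi F a = v + Phi F b → mon a u (1:K) - mon b v 1 ∈ J1 F)
    {a b : Fin s →₀ ℕ} {u v : Fin n →₀ ℕ} {i₀ : Fin s}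
    (ha : a.degree = d + 1) (hb : b.degree = d + 1)
    (huv : u + Phi F a = v + Phi F b)
    (hdisj : ∀ i, a i = 0 ∨ b i = 0)
    (hia : i₀ ∈ a.support) (hmin : ∀ j ∈ b.support, i₀ ≤ j) :
    mon a u (1:K) - mon b v 1 ∈ J1 F := by
  classical
  have hbne : b.support.Nonempty := by
    rw [Finsupp.support_nonempty_iff]
    intro h0
    rw [h0] at hb
    simp at hb
  have hai : 0 < a i₀ := Nat.pos_of_ne_zero (Finsupp.mem_support_iff.mp hia)
  have hbi₀ : b i₀ = 0 := (hdisj i₀).resolve_left (by omega)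
  obtain ⟨r, x, hxinj, hFeq, hMprop⟩ := hM i₀
  have hFeq' : F i₀ = Finset.image x Finset.univ := hFeq
  -- if a variable of F i₀ is in no F j (j ∈ b.support), then v has it
  have hvpos : ∀ c, c ∈ F i₀ → (∀ j ∈ b.support, c ∉ F j) → 1 ≤ v c := by
    intro c hc hnot
    have h1 : 1 ≤ Phi F a c := by
      rw [Phi_apply, Finsupp.sum]
      calc 1 ≤ a i₀ * chi (F i₀) c := by rw [chi_apply, if_pos hc]; omega
      _ ≤ _ := Finset.single_le_sum (f := fun i => a i * chi (F i) c)
          (fun _ _ => Nat.zero_le _) hia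
    have h2 : Phi F b c = 0 := by
      rw [Phi_apply, Finsupp.sum]
      apply Finset.sum_eq_zero
      intro j hj
      rw [chi_apply, if_neg (hnot j hj), mul_zero]
    have h3 := DFunLike.congr_fun huv c
    simp only [Finsupp.add_apply] at h3
    omega
  have hne : ∀ j ∈ b.support, j ≠ i₀ := by
    intro j hj h
    rw [h] at hj
    exact (Finsupp.mem_support_iff.mp hj) hbi₀
  have hex : ∀ c ∈ F i₀, ∃ k : Fin r, x k = c := by
    intro c hc
    have := hFeq' ▸ hc
    simpa [Finset.mem_image] using this
  have claim : ∃ j ∈ b.support, chi (F i₀) ≤ v + chi (F j) := by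
    by_cases hT : (Finset.univ.filter (fun k : Fin r => ∃ j ∈ b.support, x k ∈ F j)).Nonempty
    · set T := Finset.univ.filter (fun k : Fin r => ∃ j ∈ b.support, x k ∈ F j) with hTdef
      set k₀ := T.min' hT with hk₀def
      have hk₀T : k₀ ∈ T := T.min'_mem hT
      rw [hTdef, Finset.mem_filter] at hk₀T
      obtain ⟨-, j, hjb, hxk⟩ := hk₀T
      refine ⟨j, hjb, ?_⟩
      rw [Finsupp.le_def]
      intro c
      rw [chi_apply]
      by_cases hc : c ∈ F i₀
      · rw [if_pos hc]
        obtain ⟨k, rfl⟩ := hex c hc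
        by_cases hk : k₀ ≤ k
        · have hxkj : x k ∈ F j :=
            hMprop k₀ ⟨j, hmin j hjb⟩
              (fun h => hne j hjb (congrArg Subtype.val h)) hxk k hk
          rw [Finsupp.add_apply, chi_apply, if_pos hxkj]
          omega
        · have hknot : ∀ j' ∈ b.support, x k ∉ F j' := by
            intro j' hj' hxx
            have hkT : k ∈ T := by
              rw [hTdef, Finset.mem_filter]
              exact ⟨Finset.mem_univ _, j', hj', hxx⟩
            exact hk (T.min'_le k hkT)
          have := hvpos (x k) hc hknot
          rw [Finsupp.add_apply]
          omega
      · rw [if_neg hc]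
        exact Nat.zero_le _
    · obtain ⟨j, hjb⟩ := hbne
      refine ⟨j, hjb, ?_⟩
      rw [Finsupp.le_def]
      intro c
      rw [chi_apply]
      by_cases hc : c ∈ F i₀
      · rw [if_pos hc]
        have hnot : ∀ j' ∈ b.support, c ∉ F j' := by
          intro j' hj' hcc
          apply hT
          obtain ⟨k, rfl⟩ := hex c hc
          exact ⟨k, Finset.mem_filter.mpr ⟨Finset.mem_univ _, j', hj', hcc⟩⟩
        have := hvpos c hc hnot
        rw [Finsupp.add_apply]
        omega
      · rw [if_neg hc]
        exact Nat.zero_le _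
  obtain ⟨j, hjb, hle⟩ := claim
  have hji : j ≠ i₀ := by
    intro h
    rw [h] at hjb
    exact (Finsupp.mem_support_iff.mp hjb) hbi₀
  have hv' : (v + chi (F j) - chi (F i₀)) + chi (F i₀) = v + chi (F j) :=
    tsub_add_cancel_of_le hle
  set v' := v + chi (F j) - chi (F i₀) with hv'def
  have hgen : mon (Finsupp.single j 1) v (1:K) - mon (Finsupp.single i₀ 1) v' 1 ∈ J1 F :=
    sub_mem_J1_deg_one F j i₀ v v' hv'.symm
  have hsj : Finsupp.single j 1 ≤ b := by
    rw [Finsupp.single_le_iff]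
    exact Nat.pos_of_ne_zero (Finsupp.mem_support_iff.mp hjb)
  set b' := b - Finsupp.single j 1 + Finsupp.single i₀ 1 with hb'def
  have hb'j : b' + Finsupp.single j 1 = b + Finsupp.single i₀ 1 := by
    rw [hb'def, add_right_comm, tsub_add_cancel_of_le hsj]
  have step1 : mon b v (1:K) - mon b' v' 1 ∈ J1 F := by
    have hfac : mon b v (1:K) - mon b' v' 1 =
        mon (b - Finsupp.single j 1) 0 1 *
          (mon (Finsupp.single j 1) v 1 - mon (Finsupp.single i₀ 1) v' 1) := by
      rw [mul_sub, mon_mul, mon_mul, tsub_add_cancel_of_le hsj, zero_add, zero_add, one_mul]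
    rw [hfac]
    exact Ideal.mul_mem_left _ _ hgen
  have hphib' : Phi F b' + chi (F j) = Phi F b + chi (F i₀) := by
    rw [show chi (F j) = Phi F (Finsupp.single j 1) by rw [Phi_single, one_smul],
      show chi (F i₀) = Phi F (Finsupp.single i₀ 1) by rw [Phi_single, one_smul],
      ← Phi_add, ← Phi_add, hb'j]
  have heq2 : u + Phi F a = v' + Phi F b' := by
    apply addcancel (z := chi (F i₀) + chi (F j))
    calc u + Phi F a + (chi (F i₀) + chi (F j))
        = (v + Phi F b) + (chi (F i₀) + chi (F j)) := by rw [huv]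
      _ = (v + chi (F j)) + (Phi F b + chi (F i₀)) := by abel
      _ = (v' + chi (F i₀)) + (Phi F b' + chi (F j)) := by rw [hv', hphib']
      _ = v' + Phi F b' + (chi (F i₀) + chi (F j)) := by abel
  have hdb' : b'.degree = d + 1 := by
    have h1 := congrArg Finsupp.degree hb'j
    simp only [deg_add, deg_single] at h1
    omega
  have hb'i₀ : 0 < b' i₀ := by
    rw [hb'def]
    simp [Finsupp.add_apply, Finsupp.single_eq_same]
  have step2 : mon a u (1:K) - mon b' v' 1 ∈ J1 F :=
    cancel_step F IH hai hb'i₀ ha hdb' heq2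
  have hsplit : mon a u (1:K) - mon b v 1 =
      (mon a u 1 - mon b' v' 1) + -(mon b v 1 - mon b' v' 1) := by ring
  rw [hsplit]
  exact add_mem step2 (neg_mem step1)

lemma key
    (hM : ∀ i : Fin s, IsMElement (fun j : {j : Fin s // i ≤ j} => F j.1) ⟨i, le_refl i⟩) :
    ∀ (d : ℕ) (a b : Fin s →₀ ℕ) (u v : Fin n →₀ ℕ), a.degree = d → b.degree = d →
      u + Phi F a = v + Phi F b → mon a u (1:K) - mon b v 1 ∈ J1 F := by
  intro d
  induction d with
  | zero =>
      intro a b u v ha hb huv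
      rw [Finsupp.degree_eq_zero_iff] at ha hb
      subst ha; subst hb
      rw [Phi_zero, add_zero, add_zero] at huv
      rw [huv, sub_self]
      exact zero_mem _
  | succ d IH =>
      intro a b u v ha hb huv
      by_cases hcommon : ∃ i, 0 < a i ∧ 0 < b i
      · obtain ⟨i, hai, hbi⟩ := hcommon
        exact cancel_step F IH hai hbi ha hb huv
      · push_neg at hcommon
        have hdisj : ∀ i, a i = 0 ∨ b i = 0 := by
          intro i
          by_cases h : a i = 0
          · exact Or.inl h
          · exact Or.inr (by have := hcommon i (Nat.pos_of_ne_zero h); omega)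
        have hane : a.support.Nonempty := by
          rw [Finsupp.support_nonempty_iff]
          intro h0; rw [h0] at ha; simp at ha
        have hune : (a.support ∪ b.support).Nonempty :=
          ⟨hane.choose, Finset.mem_union_left _ hane.choose_spec⟩
        set i₀ := (a.support ∪ b.support).min' hune with hi₀def
        have hi₀mem := (a.support ∪ b.support).min'_mem hune
        have hminu : ∀ j ∈ a.support ∪ b.support, i₀ ≤ j :=
          fun j hj => Finset.min'_le _ j hj
        rcases Finset.mem_union.mp hi₀mem with hia | hib
        · exact keyStep F hM IH ha hb huv hdisj hia
            (fun j hj => hminu j (Finset.mem_union_right _ hj))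
        · have h := keyStep F hM IH hb ha huv.symm (fun i => (hdisj i).symm) hib
            (fun j hj => hminu j (Finset.mem_union_left _ hj))
          have h2 := neg_mem h
          rwa [neg_sub] at h2

lemma ker_le_J1
    (hM : ∀ i : Fin s, IsMElement (fun j : {j : Fin s // i ≤ j} => F j.1) ⟨i, le_refl i⟩) :
    RingHom.ker (phi (K := K) F).toRingHom ≤ J1 F := by
  classical
  intro p hp
  rw [RingHom.mem_ker] at hp
  have hp0 : phi F p = 0 := hp
  set w : ((Fin s →₀ ℕ) × (Fin n →₀ ℕ)) → ((Fin n →₀ ℕ) × ℕ) :=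
    fun e => (e.2 + Phi F e.1, e.1.degree) with hwdef
  set c : ((Fin s →₀ ℕ) × (Fin n →₀ ℕ)) → K :=
    fun e => MvPolynomial.coeff e.2 (MvPolynomial.coeff e.1 p) with hcdef
  set D : Finset ((Fin s →₀ ℕ) × (Fin n →₀ ℕ)) :=
    p.support.biUnion
      (fun a => (MvPolynomial.coeff a p).support.image (fun u => (a, u))) with hDdef
  have hdisjD : (p.support : Set (Fin s →₀ ℕ)).PairwiseDisjoint
      (fun a => (MvPolynomial.coeff a p).support.image (fun u => (a, u))) := by
    intro a _ a' _ haa'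
    apply Finset.disjoint_left.mpr
    intro e he he'
    obtain ⟨u, _, rfl⟩ := Finset.mem_image.mp he
    obtain ⟨u', _, h⟩ := Finset.mem_image.mp he'
    exact haa' (congrArg Prod.fst h).symm
  have hp_eq : p = ∑ e ∈ D, mon e.1 e.2 (c e) := by
    calc p = ∑ a ∈ p.support, monomial a (MvPolynomial.coeff a p) :=
        (support_sum_monomial_coeff p).symm
      _ = ∑ a ∈ p.support, ∑ u ∈ (MvPolynomial.coeff a p).support,
            mon a u (MvPolynomial.coeff u (MvPolynomial.coeff a p)) := by
          apply Finset.sum_congr rfl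
          intro a _
          conv_lhs => rw [← support_sum_monomial_coeff (MvPolynomial.coeff a p)]
          rw [map_sum]
          rfl
      _ = ∑ e ∈ D, mon e.1 e.2 (c e) := by
          rw [hDdef, Finset.sum_biUnion hdisjD]
          apply Finset.sum_congr rfl
          intro a _
          rw [Finset.sum_image (fun x _ y _ h => (Prod.mk.injEq a x a y ▸ h).2)]
  have hmap : phi F p = ∑ e ∈ D,
      Polynomial.C (monomial (e.2 + Phi F e.1) (c e)) * Polynomial.X ^ e.1.degree := by
    conv_lhs => rw [hp_eq]
    rw [map_sum]
    exact Finset.sum_congr rfl fun e _ => phi_mon F e.1 e.2 (c e)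
  have hfib : ∀ m : (Fin n →₀ ℕ) × ℕ,
      (∑ e ∈ D.filter (fun e => w e = m), c e) = 0 := by
    intro m
    have h3 : (0:K) = ∑ e ∈ D, if w e = m then c e else 0 := by
      calc (0:K) = MvPolynomial.coeff m.1 (Polynomial.coeff (phi F p) m.2) := by
            rw [hp0]; simp
        _ = ∑ e ∈ D, if w e = m then c e else 0 := by
            rw [hmap, Polynomial.finset_sum_coeff, MvPolynomial.coeff_sum]
            apply Finset.sum_congr rfl
            intro e _
            rw [Polynomial.coeff_C_mul, Polynomial.coeff_X_pow, mul_ite, mul_one, mul_zero]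
            by_cases h2 : m.2 = e.1.degree
            · rw [if_pos h2, MvPolynomial.coeff_monomial]
              by_cases h1 : e.2 + Phi F e.1 = m.1
              · rw [if_pos h1, if_pos (by rw [hwdef]; exact Prod.ext h1 h2.symm)]
              · rw [if_neg h1, if_neg (by
                  intro h
                  exact h1 (congrArg Prod.fst h))]
            · rw [if_neg h2, MvPolynomial.coeff_zero, if_neg (by
                intro h
                exact h2 ((congrArg Prod.snd h).symm))]
    rw [Finset.sum_filter]
    exact h3.symm
  set rep : ((Fin n →₀ ℕ) × ℕ) → MvPolynomial (Fin s) (MvPolynomial (Fin n) K) :=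
    fun m => if h : ∃ e : (Fin s →₀ ℕ) × (Fin n →₀ ℕ), w e = m
      then mon h.choose.1 h.choose.2 1 else 0 with hrepdef
  have hrep : ∀ e : (Fin s →₀ ℕ) × (Fin n →₀ ℕ),
      mon e.1 e.2 (1:K) - rep (w e) ∈ J1 F := by
    intro e
    have hx : ∃ e' : (Fin s →₀ ℕ) × (Fin n →₀ ℕ), w e' = w e := ⟨e, rfl⟩
    have hspec := hx.choose_spec
    have h1 : hx.choose.2 + Phi F hx.choose.1 = e.2 + Phi F e.1 :=
      congrArg Prod.fst hspec
    have h2 : hx.choose.1.degree = e.1.degree := congrArg Prod.snd hspec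
    have hrw : rep (w e) = mon hx.choose.1 hx.choose.2 1 := by
      rw [hrepdef]
      simp only [dif_pos hx]
    rw [hrw]
    exact key F hM e.1.degree e.1 hx.choose.1 e.2 hx.choose.2 rfl h2 h1.symm
  have hq0 : (∑ e ∈ D, c e • rep (w e)) = 0 := by
    rw [← Finset.sum_fiberwise_of_maps_to (g := w) (t := D.image w)
        (fun e he => Finset.mem_image_of_mem w he) (fun e => c e • rep (w e))]
    apply Finset.sum_eq_zero
    intro m hm
    have hcg : ∀ e ∈ D.filter (fun e => w e = m), c e • rep (w e) = c e • rep m := by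
      intro e he
      rw [(Finset.mem_filter.mp he).2]
    rw [Finset.sum_congr rfl hcg, ← Finset.sum_smul, hfib m, zero_smul]
  have hfinal : p = ∑ e ∈ D, c e • (mon e.1 e.2 (1:K) - rep (w e)) := by
    have hcg : ∀ e ∈ D, c e • (mon e.1 e.2 (1:K) - rep (w e))
        = mon e.1 e.2 (c e) - c e • rep (w e) := by
      intro e _
      rw [smul_sub, smul_mon, mul_one]
    rw [Finset.sum_congr rfl hcg, Finset.sum_sub_distrib, hq0, sub_zero, ← hp_eq]
  rw [hfinal]
  exact Submodule.sum_mem _ fun e _ => Submodule.smul_of_tower_mem _ _ (hrep e)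

end

end LinTypeAux

/-- If a squarefree monomial ideal is generated by an M-sequence `f 0, …, f (s-1)`
(each `f i` is an M-element of `(f i, …, f (s-1))`), then it is of linear type. -/
theorem stmt3 {K : Type*} [Field K] {n s : ℕ} (F : Fin s → Finset (Fin n))
    (hmin : ∀ i j : Fin s, i ≠ j → ¬ F i ⊆ F j)
    (hMseq : ∀ i : Fin s,
      IsMElement (fun j : {j : Fin s // i ≤ j} => F j.1) ⟨i, le_refl i⟩) :
    IsLinearType (fun i : Fin s => sqMon K (F i)) := by
  classical
  show RingHom.ker (LinTypeAux.phi F).toRingHom =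
    Ideal.span {p | p ∈ RingHom.ker (LinTypeAux.phi F).toRingHom ∧
      MvPolynomial.IsHomogeneous p 1}
  exact le_antisymm (LinTypeAux.ker_le_J1 F hMseq) (Ideal.span_le.mpr fun p hp => hp.1)
end

section
/- Let Ĩ be a squarefree monomial ideal in S[x_{n+1}] with minimal generators f̃_1,...,f̃_s, and let f_i be obtained from f̃_i by substituting x_{n+1} = 1, with I = (f_1,...,f_s) ⊆ S. If Ĩ is of linear type, then I is of linear type. -/
open MvPolynomial

section Aux

variable {K : Type*} [Field K] {n : ℕ}

/-- The inclusion `S → S[x_{n+1}]`. -/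
noncomputable def incl (K : Type*) [Field K] (n : ℕ) :
    MvPolynomial (Fin n) K →ₐ[K] MvPolynomial (Fin (n + 1)) K :=
  rename Fin.castSucc

/-- The substitution `x_{n+1} := 1`, a map `S[x_{n+1}] → S`. -/
noncomputable def subst1 (K : Type*) [Field K] (n : ℕ) :
    MvPolynomial (Fin (n + 1)) K →ₐ[K] MvPolynomial (Fin n) K :=
  aeval (Fin.snoc X 1)

lemma subst1_incl (p : MvPolynomial (Fin n) K) : subst1 K n (incl K n p) = p := by
  show aeval _ (rename _ p) = p
  rw [aeval_rename]
  have : (Fin.snoc X 1 : Fin (n + 1) → MvPolynomial (Fin n) K) ∘ Fin.castSucc = X := by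
    funext j; simp [Fin.snoc_castSucc]
  rw [this, aeval_X_left_apply]

lemma subst1_last : subst1 K n (X (Fin.last n)) = 1 := by
  show aeval _ (X _) = 1
  rw [aeval_X, Fin.snoc_last]

lemma erase_eq_image (Ft : Finset (Fin (n + 1))) (F : Finset (Fin n))
    (hF : ∀ j : Fin n, j ∈ F ↔ Fin.castSucc j ∈ Ft) :
    Ft.erase (Fin.last n) = F.image Fin.castSucc := by
  ext j
  simp only [Finset.mem_erase, Finset.mem_image]
  constructor
  · rintro ⟨hj, hjF⟩
    obtain ⟨j', rfl⟩ := Fin.exists_castSucc_eq.mpr hj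
    exact ⟨j', (hF j').mpr hjF, rfl⟩
  · rintro ⟨j', hj', rfl⟩
    exact ⟨(Fin.castSucc_lt_last j').ne, (hF j').mp hj'⟩

lemma key_sqMon (Ft : Finset (Fin (n + 1))) (F : Finset (Fin n))
    (hF : ∀ j : Fin n, j ∈ F ↔ Fin.castSucc j ∈ Ft) :
    (if Fin.last n ∈ Ft then (1 : MvPolynomial (Fin (n + 1)) K) else X (Fin.last n))
      * sqMon K Ft = incl K n (sqMon K F) * X (Fin.last n) := by
  have hprod : incl K n (sqMon K F) = ∏ j ∈ Ft.erase (Fin.last n), X j := by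
    show rename Fin.castSucc (sqMon K F) = _
    rw [erase_eq_image Ft F hF, sqMon, map_prod,
      Finset.prod_image (fun a _ b _ hab => Fin.castSucc_injective n hab)]
    simp
  by_cases hl : Fin.last n ∈ Ft
  · rw [if_pos hl, one_mul, sqMon, ← Finset.mul_prod_erase _ _ hl, hprod]
    ring
  · rw [if_neg hl, hprod, Finset.erase_eq_of_notMem hl, sqMon]
    ring

end Aux

/-- Unwrapping local cones preserves linear type: `Ft i ⊆ Fin (n+1)` are the supports
of the squarefree minimal generators of `Ĩ ⊆ S[x_{n+1}]`, and `F i ⊆ Fin n` is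
obtained by substituting `x_{n+1} = 1` in `Ft i`.  If `Ĩ` is of linear type, so is
`I = (f 0, …, f (s-1)) ⊆ S`. -/
theorem stmt4 {K : Type*} [Field K] {n s : ℕ} (Ft : Fin s → Finset (Fin (n + 1)))
    (hmin : ∀ i j : Fin s, i ≠ j → ¬ Ft i ⊆ Ft j)
    (F : Fin s → Finset (Fin n))
    (hF : ∀ (i : Fin s) (j : Fin n), j ∈ F i ↔ Fin.castSucc j ∈ Ft i)
    (h : IsLinearType (fun i : Fin s => sqMon K (Ft i))) :
    IsLinearType (fun i : Fin s => sqMon K (F i)) := by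
  classical
  unfold IsLinearType at h ⊢
  -- the auxiliary monomials
  set hmon : Fin s → MvPolynomial (Fin (n + 1)) K := fun i =>
    if Fin.last n ∈ Ft i then 1 else X (Fin.last n) with hmon_def
  have hkey : ∀ i, hmon i * sqMon K (Ft i) = incl K n (sqMon K (F i)) * X (Fin.last n) :=
    fun i => key_sqMon (Ft i) (F i) (hF i)
  have hsubst_h : ∀ i, subst1 K n (hmon i) = 1 := by
    intro i
    by_cases hl : Fin.last n ∈ Ft i
    · simp [hmon_def, hl]
    · simp [hmon_def, hl, subst1_last]
  have hsubst_mon : ∀ i, subst1 K n (sqMon K (Ft i)) = sqMon K (F i) := by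
    intro i
    have h2 := congrArg (subst1 K n) (hkey i)
    rw [map_mul, map_mul, hsubst_h i, one_mul, subst1_incl, subst1_last, mul_one] at h2
    exact h2
  -- the ring homs
  set ψ : MvPolynomial (Fin s) (MvPolynomial (Fin n) K) →+*
      Polynomial (MvPolynomial (Fin n) K) :=
    (aeval fun i : Fin s =>
      Polynomial.C ((fun i : Fin s => sqMon K (F i)) i) * Polynomial.X).toRingHom with hψ
  set ψt : MvPolynomial (Fin s) (MvPolynomial (Fin (n + 1)) K) →+*
      Polynomial (MvPolynomial (Fin (n + 1)) K) :=
    (aeval fun i : Fin s =>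
      Polynomial.C ((fun i : Fin s => sqMon K (Ft i)) i) * Polynomial.X).toRingHom with hψt
  set Φ : MvPolynomial (Fin s) (MvPolynomial (Fin (n + 1)) K) →+*
      MvPolynomial (Fin s) (MvPolynomial (Fin n) K) :=
    MvPolynomial.map (subst1 K n).toRingHom with hΦdef
  set L : MvPolynomial (Fin s) (MvPolynomial (Fin n) K) →+*
      MvPolynomial (Fin s) (MvPolynomial (Fin (n + 1)) K) :=
    eval₂Hom (C.comp (incl K n).toRingHom) (fun i => C (hmon i) * X i) with hLdef
  set M : Polynomial (MvPolynomial (Fin n) K) →+*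
      Polynomial (MvPolynomial (Fin (n + 1)) K) :=
    Polynomial.eval₂RingHom (Polynomial.C.comp (incl K n).toRingHom)
      (Polynomial.C (X (Fin.last n)) * Polynomial.X) with hMdef
  have hΦL : Φ.comp L = RingHom.id _ := by
    apply ringHom_ext
    · intro r
      simp [hΦdef, hLdef, subst1_incl]
    · intro i
      simp [hΦdef, hLdef, hsubst_h]
  have hcomm1 : ψt.comp L = M.comp ψ := by
    apply ringHom_ext
    · intro r
      simp [hψt, hLdef, hMdef, hψ]
    · intro i
      simp only [RingHom.comp_apply, hψt, hLdef, hMdef, hψ, eval₂Hom_X',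
        RingHom.coe_comp, Function.comp_apply, AlgHom.toRingHom_eq_coe,
        RingHom.coe_coe, map_mul, aeval_X, eval₂Hom_C, aeval_C,
        Polynomial.coe_eval₂RingHom, Polynomial.eval₂_mul, Polynomial.eval₂_C,
        Polynomial.eval₂_X, algebraMap_eq]
      rw [Polynomial.algebraMap_eq, ← mul_assoc, ← Polynomial.C_mul, hkey i,
        Polynomial.C_mul]
      ring
  have hcomm2 : ψ.comp Φ = (Polynomial.mapRingHom (subst1 K n).toRingHom).comp ψt := by
    apply ringHom_ext
    · intro r
      simp [hψ, hΦdef, hψt]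
    · intro i
      simp [hψ, hΦdef, hψt, hsubst_mon i]
  apply le_antisymm
  · -- ker ≤ span
    intro p hp
    have hp0 : ψ p = 0 := hp
    have hLp : L p ∈ RingHom.ker ψt := by
      show ψt (L p) = 0
      have h1 := RingHom.congr_fun hcomm1 p
      simp only [RingHom.comp_apply] at h1
      rw [h1, hp0, map_zero]
    rw [h] at hLp
    have h2 : Φ (L p) ∈ Ideal.map Φ (Ideal.span _) := Ideal.mem_map_of_mem Φ hLp
    rw [Ideal.map_span] at h2
    have hΦLp : Φ (L p) = p := RingHom.congr_fun hΦL p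
    rw [hΦLp] at h2
    refine Ideal.span_mono ?_ h2
    rintro q ⟨q', ⟨hq'ker, hq'hom⟩, rfl⟩
    refine ⟨?_, hq'hom.map _⟩
    show ψ (Φ q') = 0
    have h3 := RingHom.congr_fun hcomm2 q'
    simp only [RingHom.comp_apply] at h3
    rw [h3, show ψt q' = 0 from hq'ker, map_zero]
  · rw [Ideal.span_le]
    rintro q ⟨hq, -⟩
    exact hq
end

section
/- With the substitution x_{n+1} ↦ 1 sending f̃_i to f_i, the Taylor binomial relations transform compatibly: for any multi-indices α, β of the same length, substituting x_{n+1} = 1 into (f̃_β/gcd(f̃_α,f̃_β))T_α − (f̃_α/gcd(f̃_α,f̃_β))T_β yields (f_β/gcd(f_α,f_β))T_α − (f_α/gcd(f_α,f_β))T_β, where f_α denotes the product of the f_i over the entries of α. -/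
/-- The Taylor binomial relation
`T_{α,β} = (f_β/gcd(f_α,f_β))·T_α − (f_α/gcd(f_α,f_β))·T_β` in `S[T_1,…,T_s]`,
where the monomials `f i` are given by their exponent vectors, `f_α = ∏ i, f (α i)`
and `T_α = ∏ i, T (α i)`. -/
noncomputable def taylorRel {K : Type*} [Field K] {m s : ℕ} (f : Fin s → (Fin m →₀ ℕ))
    {k : ℕ} (α β : Fin k → Fin s) :
    MvPolynomial (Fin s) (MvPolynomial (Fin m) K) :=
  MvPolynomial.C (MvPolynomial.monomial ((∑ i, f (β i)) - ((∑ i, f (α i)) ⊓ (∑ i, f (β i)))) (1 : K))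
      * ∏ i, MvPolynomial.X (α i)
    - MvPolynomial.C (MvPolynomial.monomial ((∑ i, f (α i)) - ((∑ i, f (α i)) ⊓ (∑ i, f (β i)))) (1 : K))
      * ∏ i, MvPolynomial.X (β i)

/-- The substitution `x_{n+1} ↦ 1` (the last variable), fixing `x_1, …, x_n`. -/
noncomputable def sub1 (K : Type*) [Field K] (n : ℕ) :
    MvPolynomial (Fin (n + 1)) K →+* MvPolynomial (Fin n) K :=
  (MvPolynomial.aeval (fun i : Fin (n + 1) =>
    Fin.lastCases (motive := fun _ => MvPolynomial (Fin n) K) 1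
      (fun j => MvPolynomial.X j) i)).toRingHom

lemma sub1_monomial {K : Type*} [Field K] {n : ℕ} (w : Fin n →₀ ℕ) (c : ℕ) :
    sub1 K n (MvPolynomial.monomial
        (w.embDomain Fin.castSuccEmb + Finsupp.single (Fin.last n) c) (1 : K))
      = MvPolynomial.monomial w (1 : K) := by
  have h1 : (MvPolynomial.monomial
      (w.embDomain Fin.castSuccEmb + Finsupp.single (Fin.last n) c) (1 : K))
      = MvPolynomial.monomial (w.embDomain Fin.castSuccEmb) (1 : K)
        * MvPolynomial.X (Fin.last n) ^ c := by
    rw [MvPolynomial.X_pow_eq_monomial, MvPolynomial.monomial_mul, mul_one]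
  have h2 : (MvPolynomial.monomial (w.embDomain Fin.castSuccEmb) (1 : K))
      = MvPolynomial.rename Fin.castSucc (MvPolynomial.monomial w (1 : K)) := by
    rw [MvPolynomial.rename_monomial, Finsupp.embDomain_eq_mapDomain]
    rfl
  rw [h1, h2, map_mul, map_pow]
  show (MvPolynomial.aeval _) ((MvPolynomial.rename Fin.castSucc) _)
      * ((MvPolynomial.aeval _) (MvPolynomial.X (Fin.last n))) ^ c = _
  rw [MvPolynomial.aeval_rename, MvPolynomial.aeval_X, Fin.lastCases_last, one_pow, mul_one]
  have : ((fun i : Fin (n + 1) =>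
      Fin.lastCases (motive := fun _ => MvPolynomial (Fin n) K) 1
        (fun j => MvPolynomial.X j) i) ∘ Fin.castSucc)
      = fun j : Fin n => (MvPolynomial.X j : MvPolynomial (Fin n) K) := by
    funext j
    simp [Function.comp, Fin.lastCases_castSucc]
  rw [this]
  exact congrFun (congrArg DFunLike.coe (MvPolynomial.aeval_X_left
    (R := K) (σ := Fin n))) (MvPolynomial.monomial w (1 : K))

lemma exp_arith {n : ℕ} (u v : Fin n →₀ ℕ) (A B : ℕ) :
    (u.embDomain Fin.castSuccEmb + Finsupp.single (Fin.last n) A)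
        - ((u.embDomain Fin.castSuccEmb + Finsupp.single (Fin.last n) A)
          ⊓ (v.embDomain Fin.castSuccEmb + Finsupp.single (Fin.last n) B))
      = (u - u ⊓ v).embDomain Fin.castSuccEmb + Finsupp.single (Fin.last n) (A - A ⊓ B) := by
  ext x
  refine Fin.lastCases ?_ ?_ x
  · have hu : (u.embDomain Fin.castSuccEmb) (Fin.last n) = 0 :=
      Finsupp.embDomain_notin_range _ _ _ (by
        rintro ⟨j, hj⟩
        exact absurd hj (Fin.castSucc_lt_last j).ne)
    have hv : (v.embDomain Fin.castSuccEmb) (Fin.last n) = 0 :=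
      Finsupp.embDomain_notin_range _ _ _ (by
        rintro ⟨j, hj⟩
        exact absurd hj (Fin.castSucc_lt_last j).ne)
    have huv : ((u - u ⊓ v).embDomain Fin.castSuccEmb) (Fin.last n) = 0 :=
      Finsupp.embDomain_notin_range _ _ _ (by
        rintro ⟨j, hj⟩
        exact absurd hj (Fin.castSucc_lt_last j).ne)
    simp only [Finsupp.tsub_apply, Finsupp.add_apply, Finsupp.inf_apply, hu, hv, huv,
      Finsupp.single_eq_same, zero_add]
  · intro j
    have hA : (Finsupp.single (Fin.last n) A) j.castSucc = 0 :=
      Finsupp.single_eq_of_ne' (Fin.castSucc_lt_last j).ne'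
    have hB : (Finsupp.single (Fin.last n) B) j.castSucc = 0 :=
      Finsupp.single_eq_of_ne' (Fin.castSucc_lt_last j).ne'
    have hAB : (Finsupp.single (Fin.last n) (A - A ⊓ B)) j.castSucc = 0 :=
      Finsupp.single_eq_of_ne' (Fin.castSucc_lt_last j).ne'
    have hu : (u.embDomain Fin.castSuccEmb) j.castSucc = u j :=
      Finsupp.embDomain_apply_self _ _ _
    have hv : (v.embDomain Fin.castSuccEmb) j.castSucc = v j :=
      Finsupp.embDomain_apply_self _ _ _
    have huv : ((u - u ⊓ v).embDomain Fin.castSuccEmb) j.castSucc = (u - u ⊓ v) j :=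
      Finsupp.embDomain_apply_self _ _ _
    simp only [Finsupp.tsub_apply, Finsupp.add_apply, Finsupp.inf_apply, hA, hB, hAB, hu, hv,
      huv, add_zero]

lemma sum_ft {n s : ℕ} (ft : Fin s → (Fin (n + 1) →₀ ℕ)) (a : Fin s → ℕ)
    (f : Fin s → (Fin n →₀ ℕ))
    (hf : ∀ i, ft i = (f i).embDomain Fin.castSuccEmb
      + Finsupp.single (Fin.last n) (a i))
    {k : ℕ} (γ : Fin k → Fin s) :
    (∑ i, ft (γ i)) = (∑ i, f (γ i)).embDomain Fin.castSuccEmb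
      + Finsupp.single (Fin.last n) (∑ i, a (γ i)) := by
  have e1 : (∑ i, f (γ i)).embDomain Fin.castSuccEmb
      = ∑ i, (f (γ i)).embDomain Fin.castSuccEmb :=
    map_sum (Finsupp.embDomain.addMonoidHom Fin.castSuccEmb) _ _
  have e2 : (Finsupp.single (Fin.last n) (∑ i, a (γ i)) : Fin (n + 1) →₀ ℕ)
      = ∑ i, Finsupp.single (Fin.last n) (a (γ i)) :=
    map_sum (Finsupp.singleAddHom (Fin.last n)) _ _
  rw [e1, e2, ← Finset.sum_add_distrib]
  exact Finset.sum_congr rfl fun i _ => hf (γ i)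

set_option maxHeartbeats 1000000 in
set_option synthInstance.maxHeartbeats 400000 in
/-- Substituting `x_{n+1} = 1` (which sends `f̃ i` to `f i`, each `f̃ i` being
`x_{n+1}^{a i} · f i`) transforms Taylor relations compatibly:
`T̃_{α,β} ↦ T_{α,β}`. -/
theorem stmt5 {K : Type*} [Field K] {n s : ℕ}
    (ft : Fin s → (Fin (n + 1) →₀ ℕ)) (a : Fin s → ℕ) (f : Fin s → (Fin n →₀ ℕ))
    (hf : ∀ i, ft i = (f i).embDomain Fin.castSuccEmb
      + Finsupp.single (Fin.last n) (a i))
    {k : ℕ} (α β : Fin k → Fin s) :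
    MvPolynomial.map (sub1 K n) (taylorRel (K := K) ft α β)
      = taylorRel (K := K) f α β := by
  have hα := sum_ft ft a f hf α
  have hβ := sum_ft ft a f hf β
  have key1 : (∑ i, ft (β i)) - ((∑ i, ft (α i)) ⊓ (∑ i, ft (β i)))
      = ((∑ i, f (β i)) - ((∑ i, f (α i)) ⊓ (∑ i, f (β i)))).embDomain Fin.castSuccEmb
        + Finsupp.single (Fin.last n)
          ((∑ i, a (β i)) - ((∑ i, a (α i)) ⊓ (∑ i, a (β i)))) := by
    rw [hα, hβ, inf_comm, exp_arith, inf_comm, inf_comm (∑ i, a (α i))]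
  have key2 : (∑ i, ft (α i)) - ((∑ i, ft (α i)) ⊓ (∑ i, ft (β i)))
      = ((∑ i, f (α i)) - ((∑ i, f (α i)) ⊓ (∑ i, f (β i)))).embDomain Fin.castSuccEmb
        + Finsupp.single (Fin.last n)
          ((∑ i, a (α i)) - ((∑ i, a (α i)) ⊓ (∑ i, a (β i)))) := by
    rw [hα, hβ, exp_arith]
  unfold taylorRel
  rw [map_sub, map_mul, map_mul, MvPolynomial.map_C, MvPolynomial.map_C,
    key1, key2, sub1_monomial, sub1_monomial, map_prod, map_prod]
  simp [MvPolynomial.map_X]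
end

section
/- A facet F_1 of a simplicial complex Δ is a good leaf of Δ if and only if the squarefree monomial x_{F_1} is an M-element of the facet ideal I(Δ). -/
/-- `F` is a (simplicial) leaf of the complex with facet set `Fs`: either `F` is the
only facet, or some facet `G ≠ F` satisfies `H ∩ F ⊆ G ∩ F` for every facet `H ≠ F`. -/
def IsLeaf {n : ℕ} (Fs : Finset (Finset (Fin n))) (F : Finset (Fin n)) : Prop :=
  F ∈ Fs ∧ (Fs = {F} ∨ ∃ G ∈ Fs, G ≠ F ∧ ∀ H ∈ Fs, H ≠ F → H ∩ F ⊆ G ∩ F)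

/-- `F` and `G` are strong neighbors in the complex with facet set `Fs`. -/
def StrongNeighbors {n : ℕ} (Fs : Finset (Finset (Fin n))) (F G : Finset (Fin n)) : Prop :=
  F ∈ Fs ∧ G ∈ Fs ∧ F ≠ G ∧ ∀ H ∈ Fs, F ∩ G ⊆ H → H = F ∨ H = G

/-- A simplicial cycle: a complex with no leaf, all of whose nonempty proper
subcomplexes (generated by subsets of the facets) have a leaf. -/
def IsSimplicialCycle {n : ℕ} (Fs : Finset (Finset (Fin n))) : Prop :=
  (¬ ∃ F, IsLeaf Fs F) ∧
    ∀ Gs : Finset (Finset (Fin n)), Gs ⊆ Fs → Gs.Nonempty → Gs ≠ Fs →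
      ∃ F, IsLeaf Gs F
/-- `F` is a good leaf of the complex with facet set `Fs`: `F` is a leaf of every
subcomplex (generated by a subset of the facets) to which `F` belongs. -/
def IsGoodLeaf {n : ℕ} (Fs : Finset (Finset (Fin n))) (F : Finset (Fin n)) : Prop :=
  F ∈ Fs ∧ ∀ Gs ⊆ Fs, F ∈ Gs → IsLeaf Gs F
/-- Auxiliary: the intersections `F j ∩ F i₀` form a chain. -/
def ChainAux {n s : ℕ} (F : Fin s → Finset (Fin n)) (i₀ : Fin s) : Prop :=
  ∀ j k : Fin s, j ≠ i₀ → k ≠ i₀ →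
    F j ∩ F i₀ ⊆ F k ∩ F i₀ ∨ F k ∩ F i₀ ⊆ F j ∩ F i₀

lemma goodLeaf_chainAux {n s : ℕ} {F : Fin s → Finset (Fin n)} {i₀ : Fin s}
    (hFinj : Function.Injective F)
    (h : IsGoodLeaf (Finset.image F Finset.univ) (F i₀)) : ChainAux F i₀ := by
  intro j k hj hk
  have hsub : Finset.image F {i₀, j, k} ⊆ Finset.image F Finset.univ :=
    Finset.image_subset_image (Finset.subset_univ _)
  have hmem : F i₀ ∈ Finset.image F {i₀, j, k} := Finset.mem_image_of_mem F (by simp)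
  obtain ⟨-, hcase⟩ := h.2 _ hsub hmem
  rcases hcase with h1 | ⟨G, hG, hGne, hGmax⟩
  · exfalso
    have hjmem : F j ∈ ({F i₀} : Finset (Finset (Fin n))) :=
      h1 ▸ Finset.mem_image_of_mem F (by simp)
    exact hj (hFinj (Finset.mem_singleton.1 hjmem))
  · obtain ⟨m, hm, rfl⟩ := Finset.mem_image.1 hG
    have hmne : m ≠ i₀ := fun e => hGne (by rw [e])
    simp only [Finset.mem_insert, Finset.mem_singleton] at hm
    rcases hm with rfl | rfl | rfl
    · exact absurd rfl hmne
    · exact Or.inr (hGmax (F k) (Finset.mem_image_of_mem F (by simp))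
        (fun e => hk (hFinj e)))
    · exact Or.inl (hGmax (F j) (Finset.mem_image_of_mem F (by simp))
        (fun e => hj (hFinj e)))

lemma chainAux_goodLeaf {n s : ℕ} {F : Fin s → Finset (Fin n)} {i₀ : Fin s}
    (hFinj : Function.Injective F) (h : ChainAux F i₀) :
    IsGoodLeaf (Finset.image F Finset.univ) (F i₀) := by
  classical
  refine ⟨Finset.mem_image_of_mem F (Finset.mem_univ i₀), fun Gs hGs hi₀ => ⟨hi₀, ?_⟩⟩
  by_cases hsingle : Gs = {F i₀}
  · exact Or.inl hsingle
  right
  have hne : (Gs.erase (F i₀)).Nonempty := by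
    rw [Finset.nonempty_iff_ne_empty]
    intro hc
    rcases (Finset.erase_eq_empty_iff Gs (F i₀)).1 hc with hc | hc
    · exact absurd (hc ▸ hi₀) (Finset.notMem_empty _)
    · exact hsingle hc
  obtain ⟨G, hGmem, hmax⟩ :=
    Finset.exists_max_image (Gs.erase (F i₀)) (fun H => (H ∩ F i₀).card) hne
  have hGne : G ≠ F i₀ := Finset.ne_of_mem_erase hGmem
  refine ⟨G, Finset.mem_of_mem_erase hGmem, hGne, fun H hH hHne => ?_⟩
  obtain ⟨jH, -, rfl⟩ := Finset.mem_image.1 (hGs hH)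
  obtain ⟨jG, -, rfl⟩ := Finset.mem_image.1 (hGs (Finset.mem_of_mem_erase hGmem))
  have hjH : jH ≠ i₀ := fun e => hHne (by rw [e])
  have hjG : jG ≠ i₀ := fun e => hGne (by rw [e])
  rcases h jH jG hjH hjG with hsub | hsub
  · exact hsub
  · have hcard := hmax (F jH) (Finset.mem_erase.2 ⟨hHne, hH⟩)
    have heq : F jG ∩ F i₀ = F jH ∩ F i₀ :=
      Finset.eq_of_subset_of_card_le hsub hcard
    rw [heq]

lemma mElement_chainAux {n s : ℕ} {F : Fin s → Finset (Fin n)} {i₀ : Fin s}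
    (h : IsMElement F i₀) : ChainAux F i₀ := by
  obtain ⟨r, x, hinj, himg, hM⟩ := h
  intro j k hj hk
  by_cases hjk : F j ∩ F i₀ ⊆ F k ∩ F i₀
  · exact Or.inl hjk
  right
  obtain ⟨a, haj, hak⟩ := Finset.not_subset.1 hjk
  have hai : a ∈ F i₀ := (Finset.mem_inter.1 haj).2
  have hai' := hai
  rw [himg, Finset.mem_image] at hai'
  obtain ⟨ka, -, rfl⟩ := hai'
  intro b hb
  have hbi : b ∈ F i₀ := (Finset.mem_inter.1 hb).2
  have hbi' := hbi
  rw [himg, Finset.mem_image] at hbi'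
  obtain ⟨kb, -, rfl⟩ := hbi'
  rcases le_total ka kb with hle | hle
  · exact Finset.mem_inter.2 ⟨hM ka j hj (Finset.mem_inter.1 haj).1 kb hle, hbi⟩
  · exact absurd (Finset.mem_inter.2 ⟨hM kb k hk (Finset.mem_inter.1 hb).1 ka hle, hai⟩) hak

lemma chainAux_mElement {n s : ℕ} {F : Fin s → Finset (Fin n)} {i₀ : Fin s}
    (h : ChainAux F i₀) : IsMElement F i₀ := by
  classical
  set w : Fin n → ℕ :=
    fun a => (Finset.univ.filter fun j : Fin s => j ≠ i₀ ∧ a ∈ F j).card with hw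
  have hkey : ∀ a ∈ F i₀, ∀ b ∈ F i₀, w a ≤ w b → ∀ j, j ≠ i₀ → a ∈ F j → b ∈ F j := by
    intro a ha b hb hab j hj haj
    by_contra hbj
    have hssub : (Finset.univ.filter fun k : Fin s => k ≠ i₀ ∧ b ∈ F k) ⊂
        (Finset.univ.filter fun k : Fin s => k ≠ i₀ ∧ a ∈ F k) := by
      constructor
      · intro k hk
        simp only [Finset.mem_filter, Finset.mem_univ, true_and] at hk ⊢
        refine ⟨hk.1, ?_⟩
        rcases h j k hj hk.1 with hs | hs
        · exact (Finset.mem_inter.1 (hs (Finset.mem_inter.2 ⟨haj, ha⟩))).1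
        · exact absurd (Finset.mem_inter.1 (hs (Finset.mem_inter.2 ⟨hk.2, hb⟩))).1 hbj
      · intro hcon
        have hjmem : j ∈ Finset.univ.filter fun k : Fin s => k ≠ i₀ ∧ b ∈ F k :=
          hcon (by simp [hj, haj])
        simp only [Finset.mem_filter] at hjmem
        exact hbj hjmem.2.2
    have := Finset.card_lt_card hssub
    simp only [hw] at hab
    omega
  set r := (F i₀).card with hr
  set e : Fin r ≃ {x // x ∈ F i₀} := (F i₀).equivFin.symm with he
  set f : Fin r → ℕ := fun k => w (e k) with hf
  set σ := Tuple.sort f with hσ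
  refine ⟨r, fun k => (e (σ k) : Fin n), ?_, ?_, ?_⟩
  · exact (Subtype.val_injective.comp e.injective).comp σ.injective
  · ext a
    simp only [Finset.mem_image, Finset.mem_univ, true_and]
    constructor
    · intro ha
      exact ⟨σ.symm (e.symm ⟨a, ha⟩), by simp⟩
    · rintro ⟨k, rfl⟩
      exact (e (σ k)).2
  · intro k j hj hxk k' hkk'
    have hmono : f (σ k) ≤ f (σ k') := Tuple.monotone_sort f hkk'
    exact hkey (e (σ k)) (e (σ k)).2 (e (σ k')) (e (σ k')).2 hmono j hj hxk

/-- A facet `F i₀` of a simplicial complex is a good leaf iff the squarefree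
monomial `x_{F i₀}` is an M-element of the facet ideal. -/
theorem stmt10 {n s : ℕ} (F : Fin s → Finset (Fin n))
    (hfacets : ∀ i j : Fin s, i ≠ j → ¬ F i ⊆ F j) (i₀ : Fin s) :
    IsGoodLeaf (Finset.image F Finset.univ) (F i₀) ↔ IsMElement F i₀ := by
  have hFinj : Function.Injective F := by
    intro i j hij
    by_contra hne
    exact hfacets i j hne (hij ▸ Finset.Subset.refl _)
  exact ⟨fun h => chainAux_mElement (goodLeaf_chainAux hFinj h),
    fun h => chainAux_goodLeaf hFinj (mElement_chainAux h)⟩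
end

section
/- Let Δ be a connected simplicial complex that is not a cone, with s ≥ 4 facets, admitting a special cycle of length s. If Δ contains no special cycle of length k for any 3 ≤ k ≤ s−1, then Δ is a linear cycle, i.e., the line graph of Δ is a cycle graph on s vertices. -/
/-- The line graph of the complex with facets `F i`: facets are adjacent iff they
are distinct and intersect. -/
def lineGraph {n s : ℕ} (F : Fin s → Finset (Fin n)) : SimpleGraph (Fin s) where
  Adj i j := i ≠ j ∧ (F i ∩ F j).Nonempty
  symm := by
    constructor
    intro i j h
    exact ⟨h.1.symm, by rw [Finset.inter_comm]; exact h.2⟩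
  loopless := by constructor; intro i h; exact h.1 rfl

/-- The complex with facets `F i` admits a Berge cycle of length `m`: an alternating
sequence of `m` distinct vertices and `m` distinct facets
`v 0, G 0, v 1, G 1, …, v (m-1), G (m-1), v 0` with `v i, v (i+1) ∈ G i`. -/
def HasBergeCycle {n s : ℕ} (F : Fin s → Finset (Fin n)) (m : ℕ) : Prop :=
  ∃ (v : Fin m → Fin n) (ι : Fin m → Fin s),
    Function.Injective v ∧ Function.Injective ι ∧
    ∀ i : Fin m, v i ∈ F (ι i) ∧ v ⟨(i.val + 1) % m, Nat.mod_lt _ i.pos⟩ ∈ F (ι i)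

/-- A special cycle: a Berge cycle in which no facet of the sequence contains more
than two of the connecting vertices. -/
def HasSpecialCycle {n s : ℕ} (F : Fin s → Finset (Fin n)) (m : ℕ) : Prop :=
  ∃ (v : Fin m → Fin n) (ι : Fin m → Fin s),
    Function.Injective v ∧ Function.Injective ι ∧
    (∀ i : Fin m, v i ∈ F (ι i) ∧ v ⟨(i.val + 1) % m, Nat.mod_lt _ i.pos⟩ ∈ F (ι i)) ∧
    ∀ i : Fin m, (Finset.univ.filter fun j : Fin m => v j ∈ F (ι i)).card ≤ 2

/-! ### Auxiliary lemmas -/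

/-- Every element of `Fin s` can be written as `(b + u) % s` with `u < s`. -/
lemma aux_rep (s : ℕ) (hs : 0 < s) (b : ℕ) (k : Fin s) :
    ∃ u, u < s ∧ (b + u) % s = k.val := by
  have hb : b % s < s := Nat.mod_lt _ hs
  by_cases h : b % s ≤ k.val
  · refine ⟨k.val - b % s, by omega, ?_⟩
    have hu : k.val - b % s < s := by omega
    rw [Nat.add_mod, Nat.mod_eq_of_lt hu]
    have hsum : b % s + (k.val - b % s) = k.val := by omega
    rw [hsum, Nat.mod_eq_of_lt k.isLt]
  · refine ⟨k.val + s - b % s, by omega, ?_⟩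
    have hu : k.val + s - b % s < s := by omega
    rw [Nat.add_mod, Nat.mod_eq_of_lt hu]
    have hsum : b % s + (k.val + s - b % s) = k.val + s := by omega
    rw [hsum, Nat.add_mod_right, Nat.mod_eq_of_lt k.isLt]

lemma aux_succ_ne {s x : ℕ} (hs : 2 ≤ s) (hx : x < s) : (x + 1) % s ≠ x := by
  intro h
  by_cases h1 : x + 1 < s
  · rw [Nat.mod_eq_of_lt h1] at h; omega
  · have hx1 : x + 1 = s := by omega
    rw [hx1, Nat.mod_self] at h; omega

/-- Rotation function around the cycle. -/
def pfun (s : ℕ) (hs : 0 < s) (b : ℕ) (t : ℕ) : Fin s :=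
  ⟨(b + t) % s, Nat.mod_lt _ hs⟩

lemma pfun_val (s : ℕ) (hs : 0 < s) (b t : ℕ) :
    (pfun s hs b t).val = (b + t) % s := rfl

lemma pfun_add_one (s : ℕ) (hs : 0 < s) (hs1 : 1 < s) (b t : ℕ) :
    (pfun s hs b (t + 1)).val = ((pfun s hs b t).val + 1) % s := by
  show (b + (t + 1)) % s = ((b + t) % s + 1) % s
  rw [← Nat.add_assoc, Nat.add_mod (b + t) 1 s, Nat.mod_eq_of_lt hs1]

lemma pfun_add_s (s : ℕ) (hs : 0 < s) (b t : ℕ) :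
    pfun s hs b (t + s) = pfun s hs b t := by
  apply Fin.ext
  show (b + (t + s)) % s = (b + t) % s
  rw [← Nat.add_assoc, Nat.add_mod_right]

lemma pfun_inj (s : ℕ) (hs : 0 < s) (b : ℕ) {x y : ℕ}
    (h : pfun s hs b x = pfun s hs b y) : x % s = y % s := by
  have h' : (b + x) % s = (b + y) % s := congrArg Fin.val h
  exact Nat.ModEq.add_left_cancel' b h'

lemma pfun_shift (s : ℕ) (hs : 0 < s) (b c : ℕ) {x y : ℕ}
    (hx : x < s) (hy : y < s)
    (h : pfun s hs b (c + x) = pfun s hs b (c + y)) : x = y := by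
  have h1 : (c + x) % s = (c + y) % s := pfun_inj s hs b h
  have h2 : x % s = y % s := Nat.ModEq.add_left_cancel' c h1
  rwa [Nat.mod_eq_of_lt hx, Nat.mod_eq_of_lt hy] at h2

/-- The key combinatorial lemma: under the hypotheses, two facets of the special
cycle that are not cyclically consecutive cannot intersect. -/
lemma key_lemma {n s : ℕ} (hs : 4 ≤ s) (F : Fin s → Finset (Fin n))
    (hnotcone : ¬ ∃ v : Fin n, ∀ i : Fin s, v ∈ F i)
    (hnone : ∀ m, 3 ≤ m → m ≤ s - 1 → ¬ HasSpecialCycle F m)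
    (v : Fin s → Fin n) (ι : Fin s → Fin s)
    (hv : Function.Injective v) (hι : Function.Injective ι)
    (hmem : ∀ i : Fin s, v i ∈ F (ι i) ∧ v ⟨(i.val + 1) % s, Nat.mod_lt _ i.pos⟩ ∈ F (ι i))
    (hspec : ∀ i : Fin s, (Finset.univ.filter fun j : Fin s => v j ∈ F (ι i)).card ≤ 2)
    (i j : Fin s) (hij : i ≠ j)
    (h1 : (i.val + 1) % s ≠ j.val) (h2 : (j.val + 1) % s ≠ i.val)
    (w : Fin n) (hwi : w ∈ F (ι i)) (hwj : w ∈ F (ι j)) : False := by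
  classical
  have hs0 : 0 < s := by omega
  have hs1 : 1 < s := by omega
  set p : ℕ → Fin s := pfun s hs0 i.val with hpdef
  have p0 : p 0 = i := by
    apply Fin.ext
    show (i.val + 0) % s = i.val
    rw [Nat.add_zero, Nat.mod_eq_of_lt i.isLt]
  -- consequence of specialness
  have spec2 : ∀ x t : Fin s, v t ∈ F (ι x) → t = x ∨ t.val = (x.val + 1) % s := by
    intro x t ht
    by_contra hcon
    push_neg at hcon
    set x1 : Fin s := ⟨(x.val + 1) % s, Nat.mod_lt _ hs0⟩ with hx1def
    have hxx1 : x ≠ x1 := by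
      intro h
      have hval : x.val = (x.val + 1) % s := congrArg Fin.val h
      exact aux_succ_ne (by omega) x.isLt hval.symm
    have htx : t ≠ x := hcon.1
    have htx1 : t ≠ x1 := by
      intro h
      exact hcon.2 (by rw [h])
    have hsub : ({t, x, x1} : Finset (Fin s)) ⊆
        Finset.univ.filter (fun j => v j ∈ F (ι x)) := by
      intro z hz
      simp only [Finset.mem_insert, Finset.mem_singleton] at hz
      rw [Finset.mem_filter]
      refine ⟨Finset.mem_univ _, ?_⟩
      rcases hz with rfl | rfl | rfl
      · exact ht
      · exact (hmem _).1
      · exact (hmem _).2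
    have hcard : ({t, x, x1} : Finset (Fin s)).card = 3 := by
      rw [Finset.card_insert_of_notMem (by simp [htx, htx1]),
        Finset.card_insert_of_notMem (by simp [hxx1]), Finset.card_singleton]
    have hle := Finset.card_le_card hsub
    rw [hcard] at hle
    have := hspec x
    omega
  -- a facet not containing w
  have hsurj : Function.Surjective ι := Finite.injective_iff_surjective.mp hι
  push_neg at hnotcone
  obtain ⟨i₀, hi₀⟩ := hnotcone w
  obtain ⟨c, rfl⟩ := hsurj i₀
  -- write c = p t_c
  obtain ⟨tc, htclt, htcval⟩ := aux_rep s hs0 i.val c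
  have hptc : p tc = c := Fin.ext htcval
  have htc1 : 1 ≤ tc := by
    rcases Nat.eq_zero_or_pos tc with h | h
    · exfalso
      rw [h] at hptc
      rw [p0] at hptc
      rw [← hptc] at hi₀
      exact hi₀ hwi
    · exact h
  -- the predicate "w belongs to the facet at position t"
  set P : ℕ → Prop := fun t => w ∈ F (ι (p t)) with hPdef
  have hP0 : P 0 := by
    show w ∈ F (ι (p 0))
    rw [p0]; exact hwi
  set a₀ := Nat.findGreatest P (tc - 1) with ha₀def
  have hPa₀ : P a₀ := Nat.findGreatest_spec (Nat.zero_le _) hP0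
  have ha₀le : a₀ ≤ tc - 1 := Nat.findGreatest_le _
  have hnotP1 : ¬ P (a₀ + 1) := by
    by_cases h : a₀ + 1 ≤ tc - 1
    · exact Nat.findGreatest_is_greatest (by omega) h
    · have : a₀ + 1 = tc := by omega
      rw [this]
      show ¬ w ∈ F (ι (p tc))
      rw [hptc]; exact hi₀
  have ha₀lt : a₀ < s := by omega
  have hPs : P (a₀ + (s - a₀)) := by
    have heq : a₀ + (s - a₀) = 0 + s := by omega
    rw [heq]
    show w ∈ F (ι (p (0 + s)))
    rw [hpdef, pfun_add_s]
    exact hP0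
  have hex : ∃ u, 1 ≤ u ∧ P (a₀ + u) := ⟨s - a₀, by omega, hPs⟩
  set m := Nat.find hex with hmdef
  have hm1 : 1 ≤ m := (Nat.find_spec hex).1
  have hPm : P (a₀ + m) := (Nat.find_spec hex).2
  have hmin : ∀ u, u < m → ¬ (1 ≤ u ∧ P (a₀ + u)) := fun u hu => Nat.find_min hex hu
  have hm2 : 2 ≤ m := by
    rcases Nat.lt_or_ge m 2 with h | h
    · exfalso
      have hm1' : m = 1 := by omega
      rw [hm1'] at hPm
      exact hnotP1 hPm
    · exact h
  have hmle : m ≤ s - a₀ := Nat.find_min' hex ⟨by omega, hPs⟩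
  have interior : ∀ u, 1 ≤ u → u < m → ¬ P (a₀ + u) := by
    intro u hu1 hum hP
    exact hmin u hum ⟨hu1, hP⟩
  -- m ≤ s - 2
  have hms2 : m ≤ s - 2 := by
    by_contra hcontra
    have hmge : s - 1 ≤ m := by omega
    -- every position of w is at a₀ or a₀ + (s-1)
    have claim : ∀ k : Fin s, w ∈ F (ι k) → k = p a₀ ∨ k = p (a₀ + (s - 1)) := by
      intro k hk
      obtain ⟨u, hult, huval⟩ := aux_rep s hs0 (i.val + a₀) k
      have hpk : p (a₀ + u) = k := by
        apply Fin.ext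
        show (i.val + (a₀ + u)) % s = k.val
        rw [← Nat.add_assoc]
        exact huval
      rcases Nat.eq_zero_or_pos u with hu0 | hu1
      · left; rw [← hpk, hu0, Nat.add_zero]
      · by_cases hus : u = s - 1
        · right; rw [← hpk, hus]
        · exfalso
          have : ¬ P (a₀ + u) := interior u hu1 (by omega)
          rw [← hpk] at hk
          exact this hk
    have hcons : ((p (a₀ + (s - 1))).val + 1) % s = (p a₀).val := by
      have e1 : (p (a₀ + (s - 1) + 1)).val = ((p (a₀ + (s - 1))).val + 1) % s :=
        pfun_add_one s hs0 hs1 i.val _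
      have e2 : a₀ + (s - 1) + 1 = a₀ + s := by omega
      rw [e2] at e1
      rw [hpdef] at e1
      rw [pfun_add_s s hs0 i.val a₀] at e1
      exact e1.symm
    rcases claim i hwi with hi' | hi' <;> rcases claim j hwj with hj' | hj'
    · exact hij (hi'.trans hj'.symm)
    · apply h2
      rw [hi', hj']
      exact hcons
    · apply h1
      rw [hi', hj']
      exact hcons
    · exact hij (hi'.trans hj'.symm)
  have hm1s : m + 1 ≤ s - 1 := by omega
  -- w is not one of the cycle vertices
  have hPa₀' : w ∈ F (ι (p a₀)) := hPa₀
  have hPm' : w ∈ F (ι (p (a₀ + m))) := hPm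
  have hsucc_eq : ∀ t : ℕ, (⟨((p t).val + 1) % s, Nat.mod_lt _ (p t).pos⟩ : Fin s) = p (t + 1) := by
    intro t
    apply Fin.ext
    exact (pfun_add_one s hs0 hs1 i.val t).symm
  have spec2' : ∀ (x : ℕ) (t : Fin s), v t ∈ F (ι (p x)) → t = p x ∨ t = p (x + 1) := by
    intro x t ht
    rcases spec2 (p x) t ht with h | h
    · exact Or.inl h
    · right
      apply Fin.ext
      rw [h]
      exact (pfun_add_one s hs0 hs1 i.val x).symm
  have w_ne_v : ∀ t : Fin s, w ≠ v t := by
    intro t heq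
    have ht1 : v t ∈ F (ι (p a₀)) := heq ▸ hPa₀'
    have ht2 : v t ∈ F (ι (p (a₀ + m))) := heq ▸ hPm'
    have ha : t = p (a₀ + 0) ∨ t = p (a₀ + 1) := by
      rcases spec2' a₀ t ht1 with h | h
      · left; rw [h, Nat.add_zero]
      · right; rw [h]
    have hb : t = p (a₀ + m) ∨ t = p (a₀ + (m + 1)) := by
      rcases spec2' (a₀ + m) t ht2 with h | h
      · left; exact h
      · right; rw [h, Nat.add_assoc]
    rcases ha with ha | ha <;> rcases hb with hb | hb
    · have := pfun_shift s hs0 i.val a₀ (x := 0) (y := m) (by omega) (by omega)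
        (by rw [← hpdef]; rw [← ha, ← hb])
      omega
    · have := pfun_shift s hs0 i.val a₀ (x := 0) (y := m + 1) (by omega) (by omega)
        (by rw [← hpdef]; rw [← ha, ← hb])
      omega
    · have := pfun_shift s hs0 i.val a₀ (x := 1) (y := m) (by omega) (by omega)
        (by rw [← hpdef]; rw [← ha, ← hb])
      omega
    · have := pfun_shift s hs0 i.val a₀ (x := 1) (y := m + 1) (by omega) (by omega)
        (by rw [← hpdef]; rw [← ha, ← hb])
      omega
  -- build the shorter special cycle
  have hm1pos : 0 < m + 1 := by omega
  set V' : Fin (m + 1) → Fin n :=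
    fun k => if k.val = 0 then w else v (p (a₀ + k.val)) with hV'def
  set κ : Fin (m + 1) → Fin s := fun k => ι (p (a₀ + k.val)) with hκdef
  have shiftlt : ∀ k : Fin (m + 1), k.val < s := by
    intro k
    have := k.isLt
    omega
  apply hnone (m + 1) (by omega) (by omega)
  refine ⟨V', κ, ?_, ?_, ?_, ?_⟩
  · -- injectivity of V'
    intro k l hkl
    rw [hV'def] at hkl
    simp only at hkl
    by_cases hk0 : k.val = 0 <;> by_cases hl0 : l.val = 0
    · apply Fin.ext; omega
    · rw [if_pos hk0, if_neg hl0] at hkl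
      exact absurd hkl (w_ne_v _)
    · rw [if_neg hk0, if_pos hl0] at hkl
      exact absurd hkl.symm (w_ne_v _)
    · rw [if_neg hk0, if_neg hl0] at hkl
      have := hv hkl
      have := pfun_shift s hs0 i.val a₀ (shiftlt k) (shiftlt l) (by rw [← hpdef]; exact this)
      exact Fin.ext this
  · -- injectivity of κ
    intro k l hkl
    rw [hκdef] at hkl
    simp only at hkl
    have := hι hkl
    have := pfun_shift s hs0 i.val a₀ (shiftlt k) (shiftlt l) (by rw [← hpdef]; exact this)
    exact Fin.ext this
  · -- membership
    intro k
    constructor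
    · by_cases hk0 : k.val = 0
      · show (if k.val = 0 then w else _) ∈ F (ι (p (a₀ + k.val)))
        rw [if_pos hk0, hk0]
        exact hPa₀'
      · show (if k.val = 0 then w else v (p (a₀ + k.val))) ∈ F (ι (p (a₀ + k.val)))
        rw [if_neg hk0]
        exact (hmem _).1
    · by_cases hkm : k.val = m
      · have hnext : (k.val + 1) % (m + 1) = 0 := by rw [hkm, Nat.mod_self]
        show (if (k.val + 1) % (m + 1) = 0 then w else _) ∈ F (ι (p (a₀ + k.val)))
        rw [if_pos hnext, hkm]
        exact hPm'
      · have hklt : k.val < m := by have := k.isLt; omega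
        have hnext : (k.val + 1) % (m + 1) = k.val + 1 := Nat.mod_eq_of_lt (by omega)
        show (if (k.val + 1) % (m + 1) = 0 then w
            else v (p (a₀ + (k.val + 1) % (m + 1)))) ∈ F (ι (p (a₀ + k.val)))
        rw [if_neg (by omega)]
        rw [hnext]
        have := (hmem (p (a₀ + k.val))).2
        rw [hsucc_eq (a₀ + k.val)] at this
        rw [Nat.add_assoc] at this
        exact this
  · -- specialness
    intro k
    set k' : Fin (m + 1) := ⟨(k.val + 1) % (m + 1), Nat.mod_lt _ hm1pos⟩ with hk'def
    have hsub : (Finset.univ.filter fun j : Fin (m + 1) => V' j ∈ F (κ k)) ⊆ {k, k'} := by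
      intro j hj
      rw [Finset.mem_filter] at hj
      have hjF := hj.2
      rw [hV'def, hκdef] at hjF
      simp only at hjF
      simp only [Finset.mem_insert, Finset.mem_singleton]
      by_cases hj0 : j.val = 0
      · rw [if_pos hj0] at hjF
        by_cases hk0 : k.val = 0
        · left; apply Fin.ext; omega
        · by_cases hkm : k.val = m
          · right; apply Fin.ext
            rw [hk'def]
            show j.val = (k.val + 1) % (m + 1)
            rw [hkm, Nat.mod_self, hj0]
          · exfalso
            have hklt : k.val < m := by have := k.isLt; omega
            exact interior k.val (by omega) hklt hjF
      · rw [if_neg hj0] at hjF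
        rcases spec2' (a₀ + k.val) _ hjF with h | h
        · left
          have := pfun_shift s hs0 i.val a₀ (shiftlt j) (shiftlt k) (by rw [← hpdef]; exact h)
          exact Fin.ext this
        · right
          rw [Nat.add_assoc] at h
          have hj' := pfun_shift s hs0 i.val a₀ (x := j.val) (y := k.val + 1)
            (shiftlt j) (by have := k.isLt; omega) (by rw [← hpdef]; exact h)
          apply Fin.ext
          rw [hk'def]
          show j.val = (k.val + 1) % (m + 1)
          have hjle : j.val ≤ m := by have := j.isLt; omega
          rw [Nat.mod_eq_of_lt (by omega)]
          exact hj'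
    have hle := Finset.card_le_card hsub
    have h2' : ({k, k'} : Finset (Fin (m + 1))).card ≤ 2 := by
      refine (Finset.card_insert_le _ _).trans ?_
      simp
    omega


/-- Let `Δ` be a connected simplicial complex which is not a cone, with `s ≥ 4`
distinct facets, admitting a special cycle of length `s` but no special cycle of
length `k` for `3 ≤ k ≤ s - 1`.  Then `Δ` is a linear cycle: its line graph is a
cycle graph on `s` vertices. -/
theorem stmt12 {n s : ℕ} (hs : 4 ≤ s) (F : Fin s → Finset (Fin n))
    (hinj : Function.Injective F)
    (hfacets : ∀ i j : Fin s, i ≠ j → ¬ F i ⊆ F j)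
    (hconn : (lineGraph F).Connected)
    (hnotcone : ¬ ∃ v : Fin n, ∀ i : Fin s, v ∈ F i)
    (hbig : HasSpecialCycle F s)
    (hnone : ∀ m, 3 ≤ m → m ≤ s - 1 → ¬ HasSpecialCycle F m) :
    ∃ e : Fin s ≃ Fin s, ∀ i j : Fin s,
      (lineGraph F).Adj (e i) (e j) ↔
        ((i.val + 1) % s = j.val ∨ (j.val + 1) % s = i.val) := by
  classical
  obtain ⟨v, ι, hv, hι, hmem, hspec⟩ := hbig
  have hbij : Function.Bijective ι := ⟨hι, Finite.injective_iff_surjective.mp hι⟩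
  have hs0 : 0 < s := by omega
  have adj_iff : ∀ a b : Fin s, (lineGraph F).Adj a b ↔ a ≠ b ∧ (F a ∩ F b).Nonempty :=
    fun _ _ => Iff.rfl
  refine ⟨Equiv.ofBijective ι hbij, ?_⟩
  intro i j
  show (lineGraph F).Adj (ι i) (ι j) ↔ _
  constructor
  · intro h
    rw [adj_iff] at h
    obtain ⟨hne, w, hw⟩ := h
    rw [Finset.mem_inter] at hw
    by_contra hcon
    push_neg at hcon
    exact key_lemma hs F hnotcone hnone v ι hv hι hmem hspec i j
      (fun he => hne (by rw [he])) hcon.1 hcon.2 w hw.1 hw.2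
  · intro h
    rcases h with h | h
    · have hijne : i ≠ j := by
        intro he
        rw [he] at h
        exact aux_succ_ne (by omega) j.isLt h
      refine (adj_iff _ _).mpr ⟨fun he => hijne (hι he), ⟨v j, ?_⟩⟩
      rw [Finset.mem_inter]
      refine ⟨?_, (hmem j).1⟩
      have hfin : (⟨(i.val + 1) % s, Nat.mod_lt _ i.pos⟩ : Fin s) = j := Fin.ext h
      have := (hmem i).2
      rwa [hfin] at this
    · have hijne : j ≠ i := by
        intro he
        rw [he] at h
        exact aux_succ_ne (by omega) i.isLt h
      refine (adj_iff _ _).mpr ⟨fun he => hijne (hι he.symm), ⟨v i, ?_⟩⟩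
      rw [Finset.mem_inter]
      refine ⟨(hmem i).1, ?_⟩
      have hfin : (⟨(j.val + 1) % s, Nat.mod_lt _ j.pos⟩ : Fin s) = i := Fin.ext h
      have := (hmem j).2
      rwa [hfin] at this
end

section
/- If every connected component of the line graph of a squarefree monomial ideal I is either a tree or contains a unique cycle which has odd length, then I is of linear type. -/
noncomputable section
namespace FL
open MvPolynomial

variable {K : Type*} [Field K] {n s : ℕ}

/-- indicator finsupp of a finset -/
def ind {n : ℕ} (F : Finset (Fin n)) : Fin n →₀ ℕ := ∑ j ∈ F, Finsupp.single j 1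

lemma ind_apply (F : Finset (Fin n)) (k : Fin n) : ind F k = if k ∈ F then 1 else 0 := by
  classical
  rw [ind, Finsupp.finset_sum_apply]
  simp [Finsupp.single_apply]

lemma ind_le_iff {F : Finset (Fin n)} {c : Fin n →₀ ℕ} : ind F ≤ c ↔ ∀ k ∈ F, c k ≠ 0 := by
  rw [Finsupp.le_def]
  constructor
  · intro h k hk
    have := h k
    rw [ind_apply, if_pos hk] at this
    omega
  · intro h k
    rw [ind_apply]
    split
    · have := h k ‹_›; omega
    · omega

lemma ind_sdiff_add (A B : Finset (Fin n)) :
    ind (B \ A) + ind A = ind (A \ B) + ind B := by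
  ext k
  simp only [Finsupp.add_apply, ind_apply, Finset.mem_sdiff]
  by_cases hA : k ∈ A <;> by_cases hB : k ∈ B <;> simp [hA, hB]

/-- the exponent vector of `∏ f_i ^ a_i` -/
def Wt (f : Fin s → Finset (Fin n)) (a : Fin s →₀ ℕ) : Fin n →₀ ℕ :=
  a.sum fun i m => m • ind (f i)

variable (f : Fin s → Finset (Fin n))

@[simp] lemma Wt_zero : Wt f 0 = 0 := Finsupp.sum_zero_index

lemma Wt_add (a b : Fin s →₀ ℕ) : Wt f (a + b) = Wt f a + Wt f b :=
  Finsupp.sum_add_index' (fun _ => zero_smul _ _) (fun _ b₁ b₂ => add_smul b₁ b₂ _)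

lemma Wt_single (i : Fin s) (m : ℕ) : Wt f (Finsupp.single i m) = m • ind (f i) :=
  Finsupp.sum_single_index (zero_smul _ _)

lemma Wt_apply (a : Fin s →₀ ℕ) (k : Fin n) :
    Wt f a k = a.sum fun i m => m * ind (f i) k := by
  rw [Wt, Finsupp.sum, Finsupp.finset_sum_apply, Finsupp.sum]
  simp [Finsupp.smul_apply]

lemma degree_add (a b : Fin s →₀ ℕ) :
    Finsupp.degree (a + b) = Finsupp.degree a + Finsupp.degree b := by
  show (a+b).sum (fun _ m => m) = a.sum (fun _ m => m) + b.sum (fun _ m => m)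
  exact Finsupp.sum_add_index' (fun _ => rfl) (fun _ _ _ => rfl)

lemma degree_single (i : Fin s) (m : ℕ) : Finsupp.degree (Finsupp.single i m) = m := by
  show (Finsupp.single i m).sum (fun _ m => m) = m
  exact Finsupp.sum_single_index rfl

lemma sqMon_eq (F : Finset (Fin n)) : sqMon K F = monomial (ind F) 1 := by
  classical
  induction F using Finset.induction with
  | empty => simp [sqMon, ind]
  | @insert j F hj ih =>
    rw [sqMon, Finset.prod_insert hj, ← sqMon, ih]
    have h1 : ind (insert j F) = Finsupp.single j 1 + ind F := by
      rw [ind, ind, Finset.sum_insert hj]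
    rw [show (X j : MvPolynomial (Fin n) K) = monomial (Finsupp.single j 1) 1 from by
          rw [← X_pow_eq_monomial, pow_one],
        monomial_mul, one_mul, h1]

/-- The Rees presentation map. -/
def rees (K : Type*) [Field K] {n s : ℕ} (f : Fin s → Finset (Fin n)) :
    MvPolynomial (Fin s) (MvPolynomial (Fin n) K) →ₐ[MvPolynomial (Fin n) K]
      Polynomial (MvPolynomial (Fin n) K) :=
  MvPolynomial.aeval (fun i : Fin s => Polynomial.C (sqMon K (f i)) * Polynomial.X)

lemma rees_monomial (a : Fin s →₀ ℕ) (c : Fin n →₀ ℕ) (κ : K) :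
    rees K f (monomial a (monomial c κ)) =
      Polynomial.C (monomial (c + Wt f a) κ) * Polynomial.X ^ Finsupp.degree a := by
  rw [rees, aeval_monomial, Polynomial.algebraMap_eq]
  have key : (a.prod fun i k => (Polynomial.C (sqMon K (f i)) * Polynomial.X)^k) =
      Polynomial.C (monomial (Wt f a) (1:K)) * Polynomial.X ^ Finsupp.degree a := by
    induction a using Finsupp.induction with
    | zero => simp
    | single_add i m a hia hm ih =>
        rw [Finsupp.prod_add_index' (fun _ => pow_zero _) (fun _ b1 b2 => pow_add _ b1 b2),
            Finsupp.prod_single_index (h := fun i k => (Polynomial.C (sqMon K (f i)) * Polynomial.X)^k) (pow_zero _), ih, mul_pow, ← Polynomial.C_pow,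
            sqMon_eq, monomial_pow, one_pow, Wt_add, Wt_single, degree_add, degree_single,
            ← mul_assoc, mul_assoc (Polynomial.C _), mul_comm (Polynomial.X ^ m),
            ← mul_assoc, ← Polynomial.C_mul, monomial_mul, one_mul, mul_assoc, ← pow_add]
  rw [key, ← mul_assoc, ← Polynomial.C_mul, monomial_mul, mul_one]

/-- the Rees (presentation) ideal -/
abbrev rker (K : Type*) [Field K] {n s : ℕ} (f : Fin s → Finset (Fin n)) :
    Ideal (MvPolynomial (Fin s) (MvPolynomial (Fin n) K)) :=
  RingHom.ker (rees K f).toRingHom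

/-- the ideal generated by the degree one part -/
def QI (K : Type*) [Field K] {n s : ℕ} (f : Fin s → Finset (Fin n)) :
    Ideal (MvPolynomial (Fin s) (MvPolynomial (Fin n) K)) :=
  Ideal.span {p | p ∈ rker K f ∧ p.IsHomogeneous 1}

lemma mem_rker {p : MvPolynomial (Fin s) (MvPolynomial (Fin n) K)} :
    p ∈ rker K f ↔ rees K f p = 0 := by
  rw [RingHom.mem_ker, AlgHom.toRingHom_eq_coe, RingHom.coe_coe]

lemma binom_mem_rker {a b : Fin s →₀ ℕ} {c d : Fin n →₀ ℕ}
    (hdeg : Finsupp.degree a = Finsupp.degree b) (hw : c + Wt f a = d + Wt f b) :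
    monomial a (monomial c (1:K)) - monomial b (monomial d 1) ∈ rker K f := by
  rw [mem_rker, map_sub, rees_monomial, rees_monomial, hdeg, hw, sub_self]

lemma binom_isHomogeneous {a b : Fin s →₀ ℕ} {c d : Fin n →₀ ℕ} {m : ℕ}
    (ha : Finsupp.degree a = m) (hb : Finsupp.degree b = m) :
    ((monomial a (monomial c (1:K))) - monomial b (monomial d 1)).IsHomogeneous m :=
  (isHomogeneous_monomial _ ha).sub (isHomogeneous_monomial _ hb)

lemma linear_mem_QI {i j : Fin s} {c d : Fin n →₀ ℕ}
    (hw : c + Wt f (Finsupp.single i 1) = d + Wt f (Finsupp.single j 1)) :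
    monomial (Finsupp.single i 1) (monomial c (1:K))
      - monomial (Finsupp.single j 1) (monomial d 1) ∈ QI K f :=
  Ideal.subset_span ⟨binom_mem_rker f ((degree_single i 1).trans (degree_single j 1).symm) hw,
    binom_isHomogeneous (degree_single i 1) (degree_single j 1)⟩

section Graph
open SimpleGraph
variable {V : Type*} {G : SimpleGraph V}

open SimpleGraph

variable {V : Type*} {G : SimpleGraph V}

/-- The walk `w t, w (t+1), …, w (t+k)` along an adjacency-chain function. -/
def walkOf (w : ℕ → V) (hadj : ∀ t, G.Adj (w t) (w (t+1))) : ∀ (t k : ℕ), G.Walk (w t) (w (t+k))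
  | _, 0 => SimpleGraph.Walk.nil
  | t, (k+1) => (walkOf w hadj t k).concat (hadj (t+k))

lemma walkOf_length (w : ℕ → V) (hadj : ∀ t, G.Adj (w t) (w (t+1))) (t k : ℕ) :
    (walkOf w hadj t k).length = k := by
  induction k with
  | zero => rfl
  | succ k ih => rw [walkOf, SimpleGraph.Walk.length_concat, ih]

lemma walkOf_support (w : ℕ → V) (hadj : ∀ t, G.Adj (w t) (w (t+1))) (t k : ℕ) :
    (walkOf w hadj t k).support = (List.range (k+1)).map (fun i => w (t+i)) := by
  induction k with
  | zero => rfl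
  | succ k ih =>
      rw [walkOf, SimpleGraph.Walk.support_concat, ih, List.range_succ (n := k+1),
        List.map_append]
      rfl

lemma walkOf_edges (w : ℕ → V) (hadj : ∀ t, G.Adj (w t) (w (t+1))) (t k : ℕ) :
    (walkOf w hadj t k).edges = (List.range k).map (fun i => s(w (t+i), w (t+i+1))) := by
  induction k with
  | zero => rfl
  | succ k ih =>
      rw [walkOf, SimpleGraph.Walk.edges_concat, ih, List.range_succ (n := k),
        List.map_append, List.concat_eq_append]
      rfl

lemma no_badwalk (hOdd : ∀ (v : V) (p : G.Walk v v), p.IsCycle → Odd p.length) :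
    ∀ q, 2 ≤ q → Even q → ∀ w : ℕ → V, (∀ t, w (t + q) = w t) →
    (∀ t, G.Adj (w t) (w (t+1))) → (∀ t, w (t+2) ≠ w t) →
    (∀ t t', w t = w t' → t % 2 = t' % 2) → False := by
  classical
  intro q
  induction q using Nat.strong_induction_on with
  | _ q IH =>
  intro hq2 hqeven w hper hadj hnb hpar
  have hqm : q % 2 = 0 := Nat.even_iff.mp hqeven
  have hq2' : q ≠ 2 := by
    rintro rfl
    exact hnb 0 (hper 0)
  have hq4 : 4 ≤ q := by omega
  by_cases hinj : ∀ t t', t < q → t' < q → w t = w t' → t = t'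
  · -- injective: an even cycle, contradiction
    have hwq : w q = w 0 := by have := hper 0; rwa [Nat.zero_add] at this
    have hq0 : w (1 + (q-1)) = w 0 := by
      rw [show 1 + (q-1) = q by omega]; exact hwq
    set P : G.Walk (w 1) (w 0) := (walkOf w hadj 1 (q-1)).copy rfl hq0 with hP
    have hPsup : P.support = (List.range (q-1+1)).map (fun i => w (1+i)) := by
      rw [hP, SimpleGraph.Walk.support_copy, walkOf_support]
    have hPedges : P.edges = (List.range (q-1)).map (fun i => s(w (1+i), w (1+i+1))) := by
      rw [hP, SimpleGraph.Walk.edges_copy, walkOf_edges]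
    have hinj' : ∀ i j, i ≤ q - 1 → j ≤ q - 1 → w (1+i) = w (1+j) → i = j := by
      intro i j hi hj hij
      by_cases h1 : 1 + i < q
      · by_cases h2 : 1 + j < q
        · have := hinj _ _ h1 h2 hij; omega
        · have hjq : 1 + j = q := by omega
          rw [hjq, hwq] at hij
          have := hinj _ _ h1 (by omega : 0 < q) hij
          omega
      · have hiq : 1 + i = q := by omega
        rw [hiq, hwq] at hij
        by_cases h2 : 1 + j < q
        · have := hinj _ _ (by omega : 0 < q) h2 hij
          omega
        · omega
    have hPpath : P.IsPath := by
      rw [SimpleGraph.Walk.isPath_def, hPsup]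
      refine List.Nodup.map_on ?_ List.nodup_range
      intro i hi j hj hij
      rw [List.mem_range] at hi hj
      exact hinj' i j (by omega) (by omega) hij
    have hne : s(w 0, w 1) ∉ P.edges := by
      rw [hPedges]
      intro hmem
      rw [List.mem_map] at hmem
      obtain ⟨i, hi, hs⟩ := hmem
      rw [List.mem_range] at hi
      rw [Sym2.eq_iff] at hs
      rcases hs with ⟨h1, _⟩ | ⟨h1, h2⟩
      · have := hinj _ _ (by omega) (by omega) h1
        omega
      · have hi0 : i = 0 := hinj' i 0 (by omega) (by omega) h1
        subst hi0
        exact hnb 0 h2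
    have hcyc : (SimpleGraph.Walk.cons (hadj 0 : G.Adj (w 0) (w (0+1))) P).IsCycle := by
      rw [SimpleGraph.Walk.cons_isCycle_iff]
      exact ⟨hPpath, hne⟩
    have hlen := hOdd _ _ hcyc
    rw [SimpleGraph.Walk.length_cons, SimpleGraph.Walk.length_copy, walkOf_length] at hlen
    rw [Nat.odd_iff] at hlen
    omega
  · -- not injective: extract a shorter bad walk
    push_neg at hinj
    obtain ⟨t, t', ht, ht', heq, hne⟩ := hinj
    have hex : ∃ g, 0 < g ∧ ∃ τ, w (τ + g) = w τ := by
      rcases Nat.lt_or_ge t t' with h | h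
      · exact ⟨t' - t, by omega, t, by rw [show t + (t'-t) = t' by omega]; exact heq.symm⟩
      · exact ⟨t - t', by omega, t', by rw [show t' + (t-t') = t by omega]; exact heq⟩
    obtain ⟨g, ⟨hgpos, r, hr⟩, hminlt⟩ :
        ∃ g, (0 < g ∧ ∃ τ, w (τ + g) = w τ) ∧ ∀ m, m < g → ¬(0 < m ∧ ∃ τ, w (τ + m) = w τ) :=
      ⟨Nat.find hex, Nat.find_spec hex, fun m hm => Nat.find_min hex hm⟩
    have hgle : g < q := by
      rcases Nat.lt_or_ge t t' with h | h
      · have hw : 0 < t'-t ∧ ∃ τ, w (τ + (t'-t)) = w τ :=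
          ⟨by omega, t, by rw [show t + (t'-t) = t' by omega]; exact heq.symm⟩
        have : ¬ (t'-t < g) := fun hlt => hminlt _ hlt hw
        omega
      · have hw : 0 < t-t' ∧ ∃ τ, w (τ + (t-t')) = w τ :=
          ⟨by omega, t', by rw [show t' + (t-t') = t by omega]; exact heq⟩
        have : ¬ (t-t' < g) := fun hlt => hminlt _ hlt hw
        omega
    have hgm : g % 2 = 0 := by
      have := hpar (r + g) r hr
      omega
    have hgeven : Even g := Nat.even_iff.mpr hgm
    have hg2 : g ≠ 2 := by
      rintro rfl
      exact hnb r hr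
    have hg4 : 4 ≤ g := by omega
    have hmin' : ∀ τ, w (τ + (g-2)) ≠ w τ := by
      intro τ hcon
      exact hminlt (g-2) (by omega) ⟨by omega, τ, hcon⟩
    set w1 : ℕ → V := fun t => w (r + t % g) with hw1
    have hmodsucc : ∀ t : ℕ, t % g + 1 < g → (t+1) % g = t % g + 1 := by
      intro t h
      conv_lhs => rw [Nat.add_mod]
      rw [Nat.mod_eq_of_lt (show (1:ℕ) < g by omega)]
      exact Nat.mod_eq_of_lt h
    have hper1 : ∀ t, w1 (t + g) = w1 t := by
      intro t; simp only [hw1, Nat.add_mod_right]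
    have hadj1 : ∀ t, G.Adj (w1 t) (w1 (t+1)) := by
      intro t
      simp only [hw1]
      have hτ : t % g < g := Nat.mod_lt _ (by omega)
      rcases Nat.lt_or_ge (t % g + 1) g with h | h
      · rw [hmodsucc t h, show r + (t % g + 1) = r + t % g + 1 by omega]
        exact hadj (r + t % g)
      · have hτ' : t % g = g - 1 := by omega
        have h1 : (t+1) % g = 0 := by
          conv_lhs => rw [Nat.add_mod]
          rw [Nat.mod_eq_of_lt (show (1:ℕ) < g by omega), hτ',
            show g - 1 + 1 = g by omega, Nat.mod_self]
        rw [hτ', h1, Nat.add_zero, ← hr, show r + g = r + (g-1) + 1 by omega]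
        exact hadj (r + (g-1))
    have hnb1 : ∀ t, w1 (t+2) ≠ w1 t := by
      intro t
      simp only [hw1]
      have hτ : t % g < g := Nat.mod_lt _ (by omega)
      have h2 : (t + 2) % g = (t % g + 2) % g := by
        conv_lhs => rw [Nat.add_mod]
        rw [Nat.mod_eq_of_lt (show (2:ℕ) < g by omega)]
      rcases Nat.lt_or_ge (t % g + 2) g with h | h
      · rw [h2, Nat.mod_eq_of_lt h, show r + (t % g + 2) = r + t % g + 2 by omega]
        exact hnb (r + t % g)
      · rcases Nat.lt_or_ge (t % g + 1) g with h' | h'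
        · have hτ' : t % g = g - 2 := by omega
          have h0 : (t+2) % g = 0 := by
            rw [h2, hτ', show g - 2 + 2 = g by omega, Nat.mod_self]
          rw [h0, hτ', Nat.add_zero]
          intro hc
          exact hmin' r hc.symm
        · have hτ' : t % g = g - 1 := by omega
          have h0 : (t+2) % g = 1 := by
            rw [h2, hτ', show g - 1 + 2 = g + 1 by omega, Nat.add_mod_left,
              Nat.mod_eq_of_lt (by omega)]
          rw [h0, hτ']
          intro hc
          exact hmin' (r+1) (by rw [show r + 1 + (g-2) = r + (g-1) by omega, hc])
    have hmod2 : ∀ x : ℕ, x % 2 = (x % g) % 2 := by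
      intro x
      conv_lhs => rw [← Nat.div_add_mod x g, Nat.add_mod]
      have hev : (g * (x / g)) % 2 = 0 := by
        rw [Nat.mul_mod, hgm, Nat.zero_mul, Nat.zero_mod]
      rw [hev, Nat.zero_add, Nat.mod_mod_of_dvd _ (dvd_refl 2)]
    have hpar1 : ∀ t t', w1 t = w1 t' → t % 2 = t' % 2 := by
      intro a b hh
      have h0 := hpar _ _ hh
      have h1 := hmod2 a
      have h2 := hmod2 b
      omega
    exact IH g hgle (by omega) hgeven w1 hper1 hadj1 hnb1 hpar1


end Graph

lemma swap_exists
    (hOdd : ∀ (v : Fin s) (p : (lineGraph f).Walk v v), p.IsCycle → Odd p.length)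
    {a b : Fin s →₀ ℕ} {c d : Fin n →₀ ℕ}
    (hdisj : Disjoint a.support b.support)
    (ha : a ≠ 0) (hb : b ≠ 0)
    (hw : c + Wt f a = d + Wt f b) :
    (∃ i ∈ a.support, ∃ j ∈ b.support, ind (f j \ f i) ≤ c) ∨
    (∃ j ∈ b.support, ∃ i ∈ a.support, ind (f i \ f j) ≤ d) := by
  classical
  by_contra hcon
  push_neg at hcon
  obtain ⟨hA, hB⟩ := hcon
  have hA' : ∀ i ∈ a.support, ∀ j ∈ b.support, ∃ k, k ∈ f j ∧ k ∉ f i ∧ c k = 0 := by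
    intro i hi j hj
    have := hA i hi j hj
    rw [ind_le_iff] at this
    push_neg at this
    obtain ⟨k, hk, hk0⟩ := this
    rw [Finset.mem_sdiff] at hk
    exact ⟨k, hk.1, hk.2, not_not.mp (by simpa using hk0)⟩
  have hB' : ∀ j ∈ b.support, ∀ i ∈ a.support, ∃ k, k ∈ f i ∧ k ∉ f j ∧ d k = 0 := by
    intro j hj i hi
    have := hB j hj i hi
    rw [ind_le_iff] at this
    push_neg at this
    obtain ⟨k, hk, hk0⟩ := this
    rw [Finset.mem_sdiff] at hk
    exact ⟨k, hk.1, hk.2, not_not.mp (by simpa using hk0)⟩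
  have happly : ∀ k, c k + Wt f a k = d k + Wt f b k := by
    intro k
    rw [← Finsupp.add_apply, ← Finsupp.add_apply, hw]
  have hWtmem : ∀ (e : Fin s →₀ ℕ) (j : Fin s) (k : Fin n), j ∈ e.support → k ∈ f j →
      0 < Wt f e k := by
    intro e j k hj hk
    rw [Wt_apply, Finsupp.sum]
    have h1 : e j * ind (f j) k ≤ ∑ i ∈ e.support, e i * ind (f i) k :=
      Finset.single_le_sum (f := fun i => e i * ind (f i) k) (fun i _ => Nat.zero_le _) hj
    rw [ind_apply, if_pos hk, Nat.mul_one] at h1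
    have h2 : e j ≠ 0 := Finsupp.mem_support_iff.mp hj
    omega
  have hWtex : ∀ (e : Fin s →₀ ℕ) (k : Fin n), 0 < Wt f e k →
      ∃ i ∈ e.support, k ∈ f i := by
    intro e k hpos
    rw [Wt_apply, Finsupp.sum] at hpos
    obtain ⟨i, hi, hne⟩ := Finset.exists_ne_zero_of_sum_ne_zero (Nat.pos_iff_ne_zero.mp hpos)
    refine ⟨i, hi, ?_⟩
    by_contra hmem
    rw [ind_apply, if_neg hmem, Nat.mul_zero] at hne
    exact hne rfl
  have hparA : ∀ (k : Fin n) (j : Fin s), c k = 0 → j ∈ b.support → k ∈ f j →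
      ∃ i' ∈ a.support, k ∈ f i' := by
    intro k j hck hj hkj
    have h1 := happly k
    have h2 := hWtmem b j k hj hkj
    exact hWtex a k (by omega)
  have hparB : ∀ (k : Fin n) (i : Fin s), d k = 0 → i ∈ a.support → k ∈ f i →
      ∃ j' ∈ b.support, k ∈ f j' := by
    intro k i hdk hi hki
    have h1 := happly k
    have h2 := hWtmem a i k hi hki
    exact hWtex b k (by omega)
  -- the stepping function
  have key : ∀ x : {x : Fin s × Fin s // x.1 ∈ a.support ∧ x.2 ∈ b.support},
      ∃ y : {x : Fin s × Fin s // x.1 ∈ a.support ∧ x.2 ∈ b.support},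
        y.1.1 ≠ x.1.1 ∧ (f y.1.1 ∩ f x.1.2).Nonempty ∧ y.1.2 ≠ x.1.2 ∧
        (f y.1.1 ∩ f y.1.2).Nonempty := by
    rintro ⟨⟨i, j⟩, hi, hj⟩
    obtain ⟨k, hkj, hki, hck⟩ := hA' i hi j hj
    obtain ⟨i', hi', hki'⟩ := hparA k j hck hj hkj
    obtain ⟨k', hk'i', hk'j, hdk⟩ := hB' j hj i' hi'
    obtain ⟨j', hj', hk'j'⟩ := hparB k' i' hdk hi' hk'i'
    refine ⟨⟨(i', j'), hi', hj'⟩, ?_, ⟨k, Finset.mem_inter.mpr ⟨hki', hkj⟩⟩, ?_,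
      ⟨k', Finset.mem_inter.mpr ⟨hk'i', hk'j'⟩⟩⟩
    · intro hcc
      have hcc' : i' = i := hcc
      exact hki (hcc' ▸ hki')
    · intro hcc
      have hcc' : j' = j := hcc
      exact hk'j (hcc' ▸ hk'j')
  choose Φ hΦ using key
  obtain ⟨i0, hi0⟩ := Finsupp.support_nonempty_iff.mpr ha
  obtain ⟨j0, hj0⟩ := Finsupp.support_nonempty_iff.mpr hb
  obtain ⟨t0, t1, hne01, heq01⟩ :=
    Finite.exists_ne_map_eq_of_infinite (fun t : ℕ => Φ^[t] ⟨(i0, j0), hi0, hj0⟩)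
  have hper_ex : ∃ t0 p, 0 < p ∧ Φ^[p] (Φ^[t0] ⟨(i0, j0), hi0, hj0⟩) = Φ^[t0] ⟨(i0, j0), hi0, hj0⟩ := by
    rcases Nat.lt_or_ge t0 t1 with hlt | hge
    · refine ⟨t0, t1 - t0, by omega, ?_⟩
      rw [← Function.iterate_add_apply, show t1 - t0 + t0 = t1 by omega]
      exact heq01.symm
    · refine ⟨t1, t0 - t1, by omega, ?_⟩
      rw [← Function.iterate_add_apply, show t0 - t1 + t1 = t0 by omega]
      exact heq01
  obtain ⟨tb, p, hp, hperiod⟩ := hper_ex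
  set z : {x : Fin s × Fin s // x.1 ∈ a.support ∧ x.2 ∈ b.support} :=
    Φ^[tb] ⟨(i0, j0), hi0, hj0⟩ with hz
  set y : ℕ → {x : Fin s × Fin s // x.1 ∈ a.support ∧ x.2 ∈ b.support} :=
    fun t => Φ^[t] z with hy
  have hyper : ∀ t, y (t + p) = y t := by
    intro t
    show Φ^[t + p] z = Φ^[t] z
    rw [Function.iterate_add_apply, hperiod]
  have hystep : ∀ t, y (t+1) = Φ (y t) := by
    intro t
    show Φ^[t+1] z = Φ (Φ^[t] z)
    rw [Function.iterate_succ_apply']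
  have hrel : ∀ t, (y (t+1)).1.1 ≠ (y t).1.1 ∧ (f (y (t+1)).1.1 ∩ f (y t).1.2).Nonempty ∧
      (y (t+1)).1.2 ≠ (y t).1.2 ∧ (f (y (t+1)).1.1 ∩ f (y (t+1)).1.2).Nonempty := by
    intro t
    rw [hystep t]
    exact hΦ (y t)
  have hpair : ∀ τ, (f (y τ).1.1 ∩ f (y τ).1.2).Nonempty := by
    intro τ
    have h1 : y (τ + p) = y τ := hyper τ
    have h2 : τ + p = (τ + p - 1) + 1 := by omega
    rw [← h1, h2]
    exact (hrel (τ + p - 1)).2.2.2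
  -- the bad walk
  set w : ℕ → Fin s := fun t => if t % 2 = 0 then (y (t/2)).1.1 else (y (t/2)).1.2 with hwdef
  have hwa : ∀ t, t % 2 = 0 → w t = (y (t/2)).1.1 := by intro t ht; simp [hwdef, ht]
  have hwb : ∀ t, t % 2 = 1 → w t = (y (t/2)).1.2 := by intro t ht; simp [hwdef, ht]
  have hwamem : ∀ t, t % 2 = 0 → w t ∈ a.support := by
    intro t ht; rw [hwa t ht]; exact (y (t/2)).2.1
  have hwbmem : ∀ t, t % 2 = 1 → w t ∈ b.support := by
    intro t ht; rw [hwb t ht]; exact (y (t/2)).2.2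
  have hab_ne : ∀ u v : Fin s, u ∈ a.support → v ∈ b.support → u ≠ v := by
    intro u v hu hv hcc
    exact Finset.disjoint_left.mp hdisj hu (hcc ▸ hv)
  have hper' : ∀ t, w (t + 2*p) = w t := by
    intro t
    have h1 : (t + 2*p) % 2 = t % 2 := by omega
    have h2 : (t + 2*p) / 2 = t / 2 + p := by omega
    rcases Nat.mod_two_eq_zero_or_one t with ht | ht
    · rw [hwa t ht, hwa _ (by omega), h2, hyper]
    · rw [hwb t ht, hwb _ (by omega), h2, hyper]
  have hadj' : ∀ t, (lineGraph f).Adj (w t) (w (t+1)) := by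
    intro t
    rcases Nat.mod_two_eq_zero_or_one t with ht | ht
    · have h1 : (t+1) % 2 = 1 := by omega
      have h2 : (t+1) / 2 = t / 2 := by omega
      rw [hwa t ht, hwb _ h1, h2]
      exact ⟨hab_ne _ _ (y (t/2)).2.1 (y (t/2)).2.2, hpair (t/2)⟩
    · have h1 : (t+1) % 2 = 0 := by omega
      have h2 : (t+1) / 2 = t / 2 + 1 := by omega
      rw [hwb t ht, hwa _ h1, h2]
      refine SimpleGraph.Adj.symm ?_
      exact ⟨hab_ne _ _ (y (t/2+1)).2.1 (y (t/2)).2.2, (hrel (t/2)).2.1⟩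
  have hnb' : ∀ t, w (t+2) ≠ w t := by
    intro t
    have h2 : (t+2) / 2 = t / 2 + 1 := by omega
    rcases Nat.mod_two_eq_zero_or_one t with ht | ht
    · rw [hwa t ht, hwa _ (by omega), h2]
      exact (hrel (t/2)).1
    · rw [hwb t ht, hwb _ (by omega), h2]
      exact (hrel (t/2)).2.2.1
  have hpar' : ∀ t t', w t = w t' → t % 2 = t' % 2 := by
    intro t t' hcc
    rcases Nat.mod_two_eq_zero_or_one t with ht | ht <;>
      rcases Nat.mod_two_eq_zero_or_one t' with ht' | ht'
    · omega
    · exact absurd hcc (hab_ne _ _ (hwamem t ht) (hwbmem t' ht'))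
    · exact absurd hcc.symm (hab_ne _ _ (hwamem t' ht') (hwbmem t ht))
    · omega
  exact no_badwalk hOdd (2*p) (by omega) (by exact ⟨p, by omega⟩) w hper' hadj' hnb' hpar'

lemma sub_single_add {e : Fin s →₀ ℕ} {i : Fin s} (hi : i ∈ e.support) :
    (e - Finsupp.single i 1) + Finsupp.single i 1 = e :=
  tsub_add_cancel_of_le (Finsupp.single_le_iff.mpr (by
    have := Finsupp.mem_support_iff.mp hi; omega))

lemma degree_sub_single {e : Fin s →₀ ℕ} {i : Fin s} (hi : i ∈ e.support) {m : ℕ}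
    (hd : Finsupp.degree e = m) : Finsupp.degree (e - Finsupp.single i 1) = m - 1 := by
  have h1 := degree_add (e - Finsupp.single i 1) (Finsupp.single i 1)
  rw [sub_single_add hi, degree_single] at h1
  omega

/-- the reduction step, assuming a swap is available -/
lemma red_step {m : ℕ}
    (hIH : ∀ (a' b' : Fin s →₀ ℕ) (c' d' : Fin n →₀ ℕ), Finsupp.degree a' = m - 1 →
      Finsupp.degree b' = m - 1 → c' + Wt f a' = d' + Wt f b' →
      monomial a' (monomial c' (1:K)) - monomial b' (monomial d' 1) ∈ QI K f)
    {a b : Fin s →₀ ℕ} {c d : Fin n →₀ ℕ} {i j : Fin s}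
    (hda : Finsupp.degree a = m) (hdb : Finsupp.degree b = m)
    (hw : c + Wt f a = d + Wt f b)
    (hi : i ∈ a.support) (hj : j ∈ b.support) (hle : ind (f j \ f i) ≤ c) :
    monomial a (monomial c (1:K)) - monomial b (monomial d 1) ∈ QI K f := by
  classical
  set u : Fin n →₀ ℕ := ind (f j \ f i) with hu
  set v : Fin n →₀ ℕ := ind (f i \ f j) with hv
  set a' : Fin s →₀ ℕ := a - Finsupp.single i 1 with ha'
  set b' : Fin s →₀ ℕ := b - Finsupp.single j 1 with hb'
  set c' : Fin n →₀ ℕ := c - u with hc'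
  have hca : a' + Finsupp.single i 1 = a := sub_single_add hi
  have hcb : b' + Finsupp.single j 1 = b := sub_single_add hj
  have hcc : c' + u = c := tsub_add_cancel_of_le hle
  have huv : u + ind (f i) = v + ind (f j) := ind_sdiff_add (f i) (f j)
  -- the linear generator
  have hL : monomial (Finsupp.single i 1) (monomial u (1:K))
      - monomial (Finsupp.single j 1) (monomial v 1) ∈ QI K f := by
    apply linear_mem_QI
    rw [Wt_single, Wt_single, one_smul, one_smul]
    exact huv
  -- the middle monomial
  set P := monomial (a' + Finsupp.single j 1) (monomial (c' + v) (1:K)) with hP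
  have e1 : monomial a' (monomial c' (1:K)) * monomial (Finsupp.single i 1) (monomial u 1)
      = monomial a (monomial c 1) := by
    rw [monomial_mul, monomial_mul, one_mul, hca, hcc]
  have e2 : monomial a' (monomial c' (1:K)) * monomial (Finsupp.single j 1) (monomial v 1)
      = P := by
    rw [monomial_mul, monomial_mul, one_mul, hP]
  have e3 : monomial (Finsupp.single j 1) (1 : MvPolynomial (Fin n) K)
      * monomial a' (monomial (c' + v) (1:K)) = P := by
    rw [monomial_mul, one_mul, hP, add_comm]
  have e4 : monomial (Finsupp.single j 1) (1 : MvPolynomial (Fin n) K)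
      * monomial b' (monomial d (1:K)) = monomial b (monomial d 1) := by
    rw [monomial_mul, one_mul, add_comm, hcb]
  -- the inner binomial
  have happly : ∀ k, c k + Wt f a k = d k + Wt f b k := by
    intro k
    rw [← Finsupp.add_apply, ← Finsupp.add_apply, hw]
  have hwa : ∀ k, Wt f a k = Wt f a' k + ind (f i) k := by
    intro k
    conv_lhs => rw [← hca]
    rw [Wt_add, Wt_single, one_smul, Finsupp.add_apply]
  have hwb : ∀ k, Wt f b k = Wt f b' k + ind (f j) k := by
    intro k
    conv_lhs => rw [← hcb]
    rw [Wt_add, Wt_single, one_smul, Finsupp.add_apply]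
  have hw' : (c' + v) + Wt f a' = d + Wt f b' := by
    ext k
    have h1 := happly k
    have h2 := hwa k
    have h3 := hwb k
    have h4 : u k + ind (f i) k = v k + ind (f j) k := by
      rw [← Finsupp.add_apply, ← Finsupp.add_apply, huv]
    have h5 : c' k + u k = c k := by rw [← Finsupp.add_apply, hcc]
    simp only [Finsupp.add_apply]
    omega
  have hinner : monomial a' (monomial (c' + v) (1:K)) - monomial b' (monomial d 1) ∈ QI K f :=
    hIH a' b' (c' + v) d (degree_sub_single hi hda) (degree_sub_single hj hdb) hw'
  -- assemble
  have hkey : monomial a (monomial c (1:K)) - monomial b (monomial d 1)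
      = monomial a' (monomial c' (1:K)) *
          (monomial (Finsupp.single i 1) (monomial u 1)
            - monomial (Finsupp.single j 1) (monomial v 1))
        + monomial (Finsupp.single j 1) (1 : MvPolynomial (Fin n) K) *
          (monomial a' (monomial (c' + v) (1:K)) - monomial b' (monomial d 1)) := by
    rw [mul_sub, mul_sub, e1, e2, e3, e4, sub_add_sub_cancel]
  rw [hkey]
  exact Ideal.add_mem _ (Ideal.mul_mem_left _ _ hL) (Ideal.mul_mem_left _ _ hinner)

lemma binom_mem_QI
    (hOdd : ∀ (v : Fin s) (p : (lineGraph f).Walk v v), p.IsCycle → Odd p.length) :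
    ∀ (m : ℕ) (a b : Fin s →₀ ℕ) (c d : Fin n →₀ ℕ), Finsupp.degree a = m →
      Finsupp.degree b = m → c + Wt f a = d + Wt f b →
      monomial a (monomial c (1:K)) - monomial b (monomial d 1) ∈ QI K f := by
  classical
  intro m
  induction m using Nat.strong_induction_on with
  | _ m IH =>
  intro a b c d hda hdb hw
  by_cases hab : a = b
  · subst hab
    have hcd : c = d := add_right_cancel hw
    rw [hcd, sub_self]
    exact Ideal.zero_mem _
  · by_cases hcommon : ∃ i, i ∈ a.support ∧ i ∈ b.support
    · -- common support: factor out a variable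
      obtain ⟨i, hia, hib⟩ := hcommon
      have hm1 : 1 ≤ m := by
        have h1 := Finsupp.le_degree i a
        have h2 := Finsupp.mem_support_iff.mp hia
        omega
      set a' : Fin s →₀ ℕ := a - Finsupp.single i 1 with ha'
      set b' : Fin s →₀ ℕ := b - Finsupp.single i 1 with hb'
      have hca : a' + Finsupp.single i 1 = a := sub_single_add hia
      have hcb : b' + Finsupp.single i 1 = b := sub_single_add hib
      have hw' : c + Wt f a' = d + Wt f b' := by
        have h1 : (c + Wt f a') + Wt f (Finsupp.single i 1)
            = (d + Wt f b') + Wt f (Finsupp.single i 1) := by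
          rw [add_assoc, add_assoc, ← Wt_add, ← Wt_add, hca, hcb]
          exact hw
        exact add_right_cancel h1
      have hmem := IH (m-1) (by omega) a' b' c d
        (degree_sub_single hia hda) (degree_sub_single hib hdb) hw'
      have hkey : monomial a (monomial c (1:K)) - monomial b (monomial d 1)
          = monomial (Finsupp.single i 1) (1 : MvPolynomial (Fin n) K) *
            (monomial a' (monomial c (1:K)) - monomial b' (monomial d 1)) := by
        rw [mul_sub, monomial_mul, monomial_mul, one_mul, one_mul, add_comm, hca,
          add_comm (Finsupp.single i 1), hcb]
      rw [hkey]
      exact Ideal.mul_mem_left _ _ hmem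
    · -- disjoint supports
      have hdisj : Disjoint a.support b.support :=
        Finset.disjoint_left.mpr (fun {i} hia hib => hcommon ⟨i, hia, hib⟩)
      have hane : a ≠ 0 := by
        rintro rfl
        have h0 : m = 0 := by rw [← hda]; simp
        have hb0 : b = 0 := by
          rw [← Finsupp.degree_eq_zero_iff]
          omega
        exact hab (hb0.symm)
      have hbne : b ≠ 0 := by
        rintro rfl
        have h0 : m = 0 := by rw [← hdb]; simp
        have ha0 : a = 0 := by
          rw [← Finsupp.degree_eq_zero_iff]
          omega
        exact hab ha0
      rcases swap_exists f hOdd hdisj hane hbne hw with ⟨i, hi, j, hj, hle⟩ | ⟨j, hj, i, hi, hle⟩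
      · exact red_step f (fun a' b' c' d' h1 h2 h3 => IH (m-1)
          (by
            have h4 := Finsupp.le_degree i a
            have h5 := Finsupp.mem_support_iff.mp hi
            omega) a' b' c' d' h1 h2 h3) hda hdb hw hi hj hle
      · have hmem := red_step f (fun a' b' c' d' h1 h2 h3 => IH (m-1)
          (by
            have h4 := Finsupp.le_degree i a
            have h5 := Finsupp.mem_support_iff.mp hi
            omega) a' b' c' d' h1 h2 h3) hdb hda hw.symm hj hi hle
        have := neg_mem hmem
        rwa [neg_sub] at this

lemma rees_monomial_g (a : Fin s →₀ ℕ) (g : MvPolynomial (Fin n) K) :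
    rees K f (monomial a g)
      = Polynomial.C (g * monomial (Wt f a) 1) * Polynomial.X ^ Finsupp.degree a := by
  rw [rees, aeval_monomial, Polynomial.algebraMap_eq]
  have key : (a.prod fun i k => (Polynomial.C (sqMon K (f i)) * Polynomial.X)^k) =
      Polynomial.C (monomial (Wt f a) (1:K)) * Polynomial.X ^ Finsupp.degree a := by
    induction a using Finsupp.induction with
    | zero => simp
    | single_add i m a hia hm ih =>
        rw [Finsupp.prod_add_index' (fun _ => pow_zero _) (fun _ b1 b2 => pow_add _ b1 b2),
            Finsupp.prod_single_index
              (h := fun i k => (Polynomial.C (sqMon K (f i)) * Polynomial.X)^k) (pow_zero _),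
            ih, mul_pow, ← Polynomial.C_pow,
            sqMon_eq, monomial_pow, one_pow, Wt_add, Wt_single, degree_add, degree_single,
            ← mul_assoc, mul_assoc (Polynomial.C _), mul_comm (Polynomial.X ^ m),
            ← mul_assoc, ← Polynomial.C_mul, monomial_mul, one_mul, mul_assoc, ← pow_add]
  rw [key, ← mul_assoc, ← Polynomial.C_mul]

lemma ker_coeff {p : MvPolynomial (Fin s) (MvPolynomial (Fin n) K)}
    (hp : p ∈ rker K f) (e : ℕ) (μ : Fin n →₀ ℕ) :
    ∑ a ∈ p.support, (if e = Finsupp.degree a then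
        (if Wt f a ≤ μ then MvPolynomial.coeff (μ - Wt f a) (MvPolynomial.coeff a p) else 0)
      else 0) = 0 := by
  classical
  have h0 : rees K f p = 0 := (mem_rker f).mp hp
  have h1 : rees K f (∑ a ∈ p.support, monomial a (MvPolynomial.coeff a p)) = 0 := by
    rw [support_sum_monomial_coeff]; exact h0
  rw [map_sum] at h1
  have h2 := congrArg (fun q => Polynomial.coeff q e) h1
  simp only [Polynomial.finset_sum_coeff, Polynomial.coeff_zero] at h2
  have h3 : ∀ a ∈ p.support, (rees K f (monomial a (MvPolynomial.coeff a p))).coeff e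
      = if e = Finsupp.degree a then (MvPolynomial.coeff a p) * monomial (Wt f a) 1 else 0 := by
    intro a _
    rw [rees_monomial_g, Polynomial.coeff_C_mul, Polynomial.coeff_X_pow]
    split <;> simp
  rw [Finset.sum_congr rfl h3] at h2
  have h4 := congrArg (MvPolynomial.coeff μ) h2
  rw [MvPolynomial.coeff_sum] at h4
  simp only [MvPolynomial.coeff_zero] at h4
  refine Eq.trans (Finset.sum_congr rfl ?_) h4
  intro a _
  rw [apply_ite (MvPolynomial.coeff μ), MvPolynomial.coeff_zero,
    MvPolynomial.coeff_mul_monomial']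
  simp

/-- total number of `K`-monomials of `p` -/
def Ksize (p : MvPolynomial (Fin s) (MvPolynomial (Fin n) K)) : ℕ :=
  ∑ a ∈ p.support, (MvPolynomial.coeff a p).support.card

lemma ker_le_QI
    (hOdd : ∀ (v : Fin s) (p : (lineGraph f).Walk v v), p.IsCycle → Odd p.length) :
    ∀ (N : ℕ) (p : MvPolynomial (Fin s) (MvPolynomial (Fin n) K)), Ksize p ≤ N →
      p ∈ rker K f → p ∈ QI K f := by
  classical
  intro N
  induction N using Nat.strong_induction_on with
  | _ N IH =>
  intro p hsize hp
  by_cases hp0 : p = 0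
  · rw [hp0]; exact Ideal.zero_mem _
  have hsupp : p.support.Nonempty :=
    Finset.nonempty_iff_ne_empty.mpr (fun hcc => hp0 (MvPolynomial.support_eq_empty.mp hcc))
  obtain ⟨a₀, ha₀⟩ := hsupp
  have hg₀ : MvPolynomial.coeff a₀ p ≠ 0 := MvPolynomial.mem_support_iff.mp ha₀
  have hgsupp : (MvPolynomial.coeff a₀ p).support.Nonempty :=
    Finset.nonempty_iff_ne_empty.mpr (fun hcc => hg₀ (MvPolynomial.support_eq_empty.mp hcc))
  obtain ⟨c₀, hc₀⟩ := hgsupp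
  have hκ0 : MvPolynomial.coeff c₀ (MvPolynomial.coeff a₀ p) ≠ 0 :=
    MvPolynomial.mem_support_iff.mp hc₀
  set κ := MvPolynomial.coeff c₀ (MvPolynomial.coeff a₀ p) with hκ
  set e := Finsupp.degree a₀ with he
  set μ := c₀ + Wt f a₀ with hμ
  have hsum := ker_coeff f hp e μ
  have hterm₀ : (if e = Finsupp.degree a₀ then
      (if Wt f a₀ ≤ μ then MvPolynomial.coeff (μ - Wt f a₀) (MvPolynomial.coeff a₀ p) else 0)
      else 0) = κ := by
    have hwle : Wt f a₀ ≤ μ := by rw [hμ]; exact le_add_self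
    rw [if_pos he, if_pos hwle, hμ, add_tsub_cancel_right, hκ]
  have hex : ∃ a₁ ∈ p.support, a₁ ≠ a₀ ∧ (if e = Finsupp.degree a₁ then
      (if Wt f a₁ ≤ μ then MvPolynomial.coeff (μ - Wt f a₁) (MvPolynomial.coeff a₁ p) else 0)
      else 0) ≠ 0 := by
    by_contra hcc
    push_neg at hcc
    have hsingle := Finset.sum_eq_single (s := p.support) a₀
      (fun b hb hbne => hcc b hb hbne) (fun hn => absurd ha₀ hn)
    rw [hsingle, hterm₀] at hsum
    exact hκ0 hsum
  obtain ⟨a₁, ha₁, hne₁, hterm₁⟩ := hex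
  have hde : e = Finsupp.degree a₁ := by
    by_contra hcc; rw [if_neg hcc] at hterm₁; exact hterm₁ rfl
  rw [if_pos hde] at hterm₁
  have hle₁ : Wt f a₁ ≤ μ := by
    by_contra hcc; rw [if_neg hcc] at hterm₁; exact hterm₁ rfl
  rw [if_pos hle₁] at hterm₁
  set c₁ := μ - Wt f a₁ with hc₁def
  have hμ₁ : c₁ + Wt f a₁ = μ := tsub_add_cancel_of_le hle₁
  have hc₁mem : c₁ ∈ (MvPolynomial.coeff a₁ p).support :=
    MvPolynomial.mem_support_iff.mpr hterm₁
  -- the binomial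
  set B := monomial a₀ (monomial c₀ (1:K)) - monomial a₁ (monomial c₁ 1) with hB
  have hBQ : B ∈ QI K f :=
    binom_mem_QI f hOdd e a₀ a₁ c₀ c₁ he.symm hde.symm (hμ.symm.trans hμ₁.symm)
  have hBker : B ∈ rker K f :=
    binom_mem_rker f (he.symm.symm.trans hde) (hμ.symm.trans hμ₁.symm)
  set q := MvPolynomial.C (MvPolynomial.C κ) * B with hqdef
  have hqeq : q = monomial a₀ (monomial c₀ κ) - monomial a₁ (monomial c₁ κ) := by
    rw [hqdef, hB]
    simp only [mul_sub, C_mul_monomial, mul_one]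
  set p' := p - q with hp'def
  have hp'ker : p' ∈ rker K f := Ideal.sub_mem _ hp (Ideal.mul_mem_left _ _ hBker)
  have hp'eq : p' = (p - monomial a₀ (monomial c₀ κ)) + monomial a₁ (monomial c₁ κ) := by
    rw [hp'def, hqeq]; ring
  have hco : ∀ a, MvPolynomial.coeff a p' = MvPolynomial.coeff a p
      - (if a₀ = a then monomial c₀ κ else 0) + (if a₁ = a then monomial c₁ κ else 0) := by
    intro a
    rw [hp'eq, MvPolynomial.coeff_add, MvPolynomial.coeff_sub, MvPolynomial.coeff_monomial,
      MvPolynomial.coeff_monomial]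
  have hsubset : p'.support ⊆ p.support := by
    intro a ha
    by_contra hnot
    have h0 : MvPolynomial.coeff a p = 0 := MvPolynomial.notMem_support_iff.mp hnot
    have hne0 : a₀ ≠ a := fun hcc => hnot (hcc ▸ ha₀)
    have hne1 : a₁ ≠ a := fun hcc => hnot (hcc ▸ ha₁)
    have hz : MvPolynomial.coeff a p' = 0 := by
      rw [hco a, h0, if_neg hne0, if_neg hne1]; ring
    exact (MvPolynomial.mem_support_iff.mp ha) hz
  have hcoeff₀ : MvPolynomial.coeff a₀ p' = MvPolynomial.coeff a₀ p - monomial c₀ κ := by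
    rw [hco a₀, if_pos rfl, if_neg hne₁, add_zero]
  have hcoeff₁ : MvPolynomial.coeff a₁ p' = MvPolynomial.coeff a₁ p + monomial c₁ κ := by
    rw [hco a₁, if_neg (fun hcc => hne₁ hcc.symm), if_pos rfl, sub_zero]
  have hcoeffo : ∀ a, a ≠ a₀ → a ≠ a₁ →
      MvPolynomial.coeff a p' = MvPolynomial.coeff a p := by
    intro a h0 h1
    rw [hco a, if_neg (fun hcc => h0 hcc.symm), if_neg (fun hcc => h1 hcc.symm),
      sub_zero, add_zero]
  have hsupp₀ : (MvPolynomial.coeff a₀ p').support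
      = (MvPolynomial.coeff a₀ p).support.erase c₀ := by
    rw [hcoeff₀]
    ext k
    rw [MvPolynomial.mem_support_iff, MvPolynomial.coeff_sub, MvPolynomial.coeff_monomial,
      Finset.mem_erase, MvPolynomial.mem_support_iff]
    by_cases hk : c₀ = k
    · subst hk
      rw [if_pos rfl, ← hκ, sub_self]
      simp
    · rw [if_neg hk, sub_zero]
      exact ⟨fun hcc => ⟨fun hcc2 => hk hcc2.symm, hcc⟩, fun hcc => hcc.2⟩
  have hcard₀ : (MvPolynomial.coeff a₀ p').support.card
      < (MvPolynomial.coeff a₀ p).support.card := by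
    rw [hsupp₀]; exact Finset.card_erase_lt_of_mem hc₀
  have hcard₁ : (MvPolynomial.coeff a₁ p').support.card
      ≤ (MvPolynomial.coeff a₁ p).support.card := by
    apply Finset.card_le_card
    rw [hcoeff₁]
    refine subset_trans MvPolynomial.support_add ?_
    apply Finset.union_subset (Finset.Subset.refl _)
    intro k hk
    rw [MvPolynomial.support_monomial] at hk
    by_cases hκz : κ = 0
    · rw [if_pos hκz] at hk; exact absurd hk (Finset.notMem_empty k)
    · rw [if_neg hκz] at hk
      rw [Finset.mem_singleton] at hk
      subst hk
      exact hc₁mem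
  have hsize' : Ksize p' < Ksize p := by
    have h1 : Ksize p' ≤ ∑ a ∈ p.support, (MvPolynomial.coeff a p').support.card :=
      Finset.sum_le_sum_of_subset hsubset
    have h2 : ∑ a ∈ p.support, (MvPolynomial.coeff a p').support.card
        < ∑ a ∈ p.support, (MvPolynomial.coeff a p).support.card := by
      refine Finset.sum_lt_sum ?_ ⟨a₀, ha₀, hcard₀⟩
      intro a ha
      by_cases h0 : a = a₀
      · subst h0; exact le_of_lt hcard₀
      · by_cases h1 : a = a₁
        · subst h1; exact hcard₁
        · rw [hcoeffo a h0 h1]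
    exact lt_of_le_of_lt h1 h2
  have hp'Q : p' ∈ QI K f := IH (Ksize p') (lt_of_lt_of_le hsize' hsize) p' le_rfl hp'ker
  have hfinal : p = p' + q := by rw [hp'def]; ring
  rw [hfinal]
  exact Ideal.add_mem _ hp'Q (Ideal.mul_mem_left _ _ hBQ)

end FL
end


/-- Fouli–Lin: if every connected component of the line graph of a squarefree
monomial ideal `I` (with minimal generators `f i`) is either a tree or contains a
unique cycle, which has odd length — i.e. every cycle of the line graph is odd and
any two cycles in the same component have the same edge set — then `I` is of linear
type. -/
theorem stmt16 {K : Type*} [Field K] {n s : ℕ} (f : Fin s → Finset (Fin n))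
    (hmin : ∀ i j : Fin s, i ≠ j → ¬ f i ⊆ f j)
    (h : ∀ (v : Fin s) (p : (lineGraph f).Walk v v), p.IsCycle →
      Odd p.length ∧
        ∀ (w : Fin s) (q : (lineGraph f).Walk w w), q.IsCycle →
          (lineGraph f).Reachable v w → p.edges.toFinset = q.edges.toFinset) :
    IsLinearType (fun i : Fin s => sqMon K (f i)) := by
  classical
  have hOdd : ∀ (v : Fin s) (p : (lineGraph f).Walk v v), p.IsCycle → Odd p.length :=
    fun v p hc => (h v p hc).1
  apply le_antisymm
  · intro p hp
    exact FL.ker_le_QI f hOdd (FL.Ksize p) p le_rfl hp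
  · rw [Ideal.span_le]
    intro p hp
    exact hp.1
end
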